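/- arXiv:2202.11059 — 9 statements merged into one kernel-verified Lean document; each statement's English description precedes it below -/
import Mathlib

section
/- For every integer d ≥ 2, the d-dimensional Alon–Tarsi number of length 2 is positive; in fact, every d-dimensional Latin hypercube of length 2 has full sign +1, so AT_d(2) equals the number of d-dimensional Latin hypercubes of length 2. -/
open scoped Classical

namespace AT

/-- Lexicographic strict order on cells of `[k]^d`. -/
def cellLt {d k : ℕ} (a b : Fin d → Fin k) : Prop :=
  ∃ i : Fin d, (∀ j : Fin d, j < i → a j = b j) ∧ a i < b i

/-- Number of inversions of the values of `C` (blanks coded by `0`) in the slice of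
direction `ℓ` with coordinate `j`, cells compared in lexicographic order. -/
noncomputable def sliceInv {d k : ℕ} (C : (Fin d → Fin k) → ℕ) (ℓ : Fin d) (j : Fin k) : ℕ :=
  Set.ncard {p : (Fin d → Fin k) × (Fin d → Fin k) |
    p.1 ℓ = j ∧ p.2 ℓ = j ∧ cellLt p.1 p.2 ∧ C p.2 ≠ 0 ∧ C p.2 < C p.1}

/-- Directional sign: product over the slices in direction `ℓ` of the signs of the
slice permutations (computed as `(-1)^inversions`). -/
noncomputable def dirSgn {d k : ℕ} (C : (Fin d → Fin k) → ℕ) (ℓ : Fin d) : ℤ :=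
  ∏ j : Fin k, (-1 : ℤ) ^ sliceInv C ℓ j

/-- Full sign of a (partial) Latin hypercube. -/
noncomputable def fullSgn {d k : ℕ} (C : (Fin d → Fin k) → ℕ) : ℤ :=
  ∏ ℓ : Fin d, dirSgn C ℓ

/-- `C` is a `d`-dimensional Latin hypercube of length `k` with values in `[n]`:
every value of `[n]` occurs exactly once in every slice. -/
def IsLatin (d k n : ℕ) (C : (Fin d → Fin k) → ℕ) : Prop :=
  (∀ a, 1 ≤ C a ∧ C a ≤ n) ∧
  ∀ (ℓ : Fin d) (j : Fin k) (v : ℕ), 1 ≤ v → v ≤ n →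
    ∃! a : Fin d → Fin k, a ℓ = j ∧ C a = v

end AT

open Finset

namespace ATProof

variable {d n : ℕ}

abbrev Cell (d : ℕ) := Fin d → Fin 2

def flip {d : ℕ} (a : Cell d) : Cell d := fun i => a i + 1

lemma flip_flip {d : ℕ} (a : Cell d) : flip (flip a) = a := by
  funext i
  show a i + 1 + 1 = a i
  exact (by decide : ∀ x : Fin 2, x + 1 + 1 = x) (a i)

lemma cellLt_flip {d : ℕ} {a b : Cell d} (h : AT.cellLt a b) :
    AT.cellLt (flip b) (flip a) := by
  obtain ⟨i, h1, h2⟩ := h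
  refine ⟨i, fun j hj => ?_, ?_⟩
  · show b j + 1 = a j + 1
    rw [h1 j hj]
  · exact (by decide : ∀ x y : Fin 2, x < y → y + 1 < x + 1) _ _ h2

lemma cellLt_ne {d : ℕ} {a b : Cell d} (h : AT.cellLt a b) : a ≠ b := by
  rintro rfl
  obtain ⟨i, -, h2⟩ := h
  exact lt_irrefl _ h2

lemma cellLt_asymm {d : ℕ} {a b : Cell d} (h : AT.cellLt a b) : ¬ AT.cellLt b a := by
  rintro ⟨i', g1, g2⟩
  obtain ⟨i, h1, h2⟩ := h
  rcases lt_trichotomy i i' with hlt | rfl | hlt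
  · rw [g1 i hlt] at h2; exact lt_irrefl _ h2
  · exact lt_irrefl _ (h2.trans g2)
  · rw [h1 i' hlt] at g2; exact lt_irrefl _ g2

lemma cellLt_trichot {d : ℕ} {a b : Cell d} (h : a ≠ b) :
    AT.cellLt a b ∨ AT.cellLt b a := by
  have hne : ∃ i, a i ≠ b i := by
    by_contra hc; push_neg at hc; exact h (funext hc)
  obtain ⟨i, hi⟩ := hne
  set s := univ.filter (fun i : Fin d => a i ≠ b i) with hs_def
  have hs : s.Nonempty := ⟨i, by simp [hs_def, hi]⟩
  set i0 := s.min' hs with hi0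
  have hmem : a i0 ≠ b i0 := by have := s.min'_mem hs; simpa [hs_def] using this
  have hmin : ∀ j, j < i0 → a j = b j := by
    intro j hj
    by_contra hc
    exact absurd (s.min'_le j (by simp [hs_def, hc])) (not_le.mpr hj)
  rcases lt_or_gt_of_ne hmem with h' | h'
  · exact Or.inl ⟨i0, hmin, h'⟩
  · exact Or.inr ⟨i0, fun j hj => (hmin j hj).symm, h'⟩

lemma flip_val (hd : 0 < d) {C : Cell d → ℕ} (h : AT.IsLatin d 2 n C) (a : Cell d) :
    C (flip a) = C a := by
  obtain ⟨hb, hu⟩ := h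
  set i0 : Fin d := ⟨0, hd⟩ with hi0
  obtain ⟨b, ⟨hb1, hb2⟩, hbu⟩ := hu i0 (a i0 + 1) (C a) (hb a).1 (hb a).2
  have hba : flip a = b := by
    funext i
    by_contra hne
    have hbi : b i = a i := by
      have : ¬ a i + 1 = b i := fun hc => hne hc
      exact (by decide : ∀ x y : Fin 2, ¬ x + 1 = y → y = x) _ _ this
    obtain ⟨c, -, hcu⟩ := hu i (a i) (C a) (hb a).1 (hb a).2
    have h1 : b = c := hcu b ⟨hbi, hb2⟩
    have h2 : a = c := hcu a ⟨rfl, rfl⟩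
    have h3 : b i0 = a i0 := by rw [h1, ← h2]
    rw [hb1] at h3
    exact (by decide : ∀ x : Fin 2, ¬ x + 1 = x) _ h3
  rw [hba, hb2]

lemma ncard_filter {α : Type*} [Fintype α] (P : α → Prop) :
    Set.ncard {x | P x} = (univ.filter P).card := by
  rw [Set.ncard_eq_toFinset_card', Set.toFinset_setOf]

lemma sliceInv_eq {d : ℕ} (C : Cell d → ℕ) (ℓ : Fin d) (j : Fin 2) :
    AT.sliceInv C ℓ j = (univ.filter fun p : Cell d × Cell d =>
      p.1 ℓ = j ∧ p.2 ℓ = j ∧ AT.cellLt p.1 p.2 ∧ C p.2 ≠ 0 ∧ C p.2 < C p.1).card := by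
  convert ncard_filter (fun p : Cell d × Cell d =>
      p.1 ℓ = j ∧ p.2 ℓ = j ∧ AT.cellLt p.1 p.2 ∧ C p.2 ≠ 0 ∧ C p.2 < C p.1) using 2
  rfl
  ext p
  simp

lemma slice_card (hd : 0 < d) {C : Cell d → ℕ} (h : AT.IsLatin d 2 n C) (ℓ : Fin d)
    (j : Fin 2) : (univ.filter fun a : Cell d => a ℓ = j).card = n := by
  obtain ⟨hb, hu⟩ := h
  have key : (univ.filter fun a : Cell d => a ℓ = j).card = (Finset.Icc 1 n).card := by
    apply Finset.card_bij (fun a _ => C a)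
    · intro a ha
      rw [Finset.mem_Icc]
      exact ⟨(hb a).1, (hb a).2⟩
    · intro a ha a' ha' hab
      simp only [mem_filter, mem_univ, true_and] at ha ha'
      obtain ⟨c, -, hcu⟩ := hu ℓ j (C a) (hb a).1 (hb a).2
      rw [hcu a ⟨ha, rfl⟩, hcu a' ⟨ha', hab.symm⟩]
    · intro v hv
      rw [Finset.mem_Icc] at hv
      obtain ⟨c, ⟨hc1, hc2⟩, -⟩ := hu ℓ j v hv.1 hv.2
      exact ⟨c, by simp [hc1], hc2⟩
  rw [key, Nat.card_Icc]
  exact Nat.add_sub_cancel n 1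

lemma pairs_card (hd : 0 < d) {C : Cell d → ℕ} (h : AT.IsLatin d 2 n C) (ℓ : Fin d) :
    2 * (univ.filter fun p : Cell d × Cell d =>
        p.1 ℓ = 0 ∧ p.2 ℓ = 0 ∧ AT.cellLt p.1 p.2).card = n * n - n := by
  classical
  set s := univ.filter fun a : Cell d => a ℓ = 0 with hs
  have hsc : s.card = n := slice_card hd h ℓ 0
  set D := (s ×ˢ s).filter (fun p => p.1 ≠ p.2) with hD
  have h1 : ((s ×ˢ s).filter (fun p => p.1 = p.2)).card + D.card = n * n := by
    rw [hD, Finset.card_filter_add_card_filter_not, Finset.card_product, hsc]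
  have h2 : ((s ×ˢ s).filter (fun p => p.1 = p.2)).card = s.card := by
    apply Finset.card_bij (fun p _ => p.1)
    · intro p hp
      simp only [Finset.mem_filter, Finset.mem_product] at hp
      exact hp.1.1
    · intro p hp q hq hpq
      simp only [Finset.mem_filter, Finset.mem_product] at hp hq
      have : p.2 = q.2 := by rw [← hp.2, ← hq.2, hpq]
      exact Prod.ext hpq this
    · intro a ha
      exact ⟨(a, a), by simp [Finset.mem_filter, Finset.mem_product, ha], rfl⟩
  have h3 : (D.filter fun p => AT.cellLt p.1 p.2).card
      = (D.filter fun p => ¬ AT.cellLt p.1 p.2).card := by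
    apply Finset.card_bij (fun p _ => (p.2, p.1))
    · intro p hp
      simp only [hD, Finset.mem_filter, Finset.mem_product] at hp ⊢
      exact ⟨⟨⟨hp.1.1.2, hp.1.1.1⟩, fun hc => hp.1.2 hc.symm⟩, cellLt_asymm hp.2⟩
    · intro p hp q hq hpq
      have e1 : p.2 = q.2 := congrArg Prod.fst hpq
      have e2 : p.1 = q.1 := congrArg Prod.snd hpq
      exact Prod.ext e2 e1
    · intro q hq
      simp only [hD, Finset.mem_filter, Finset.mem_product] at hq
      have hlt : AT.cellLt q.2 q.1 := by
        rcases cellLt_trichot hq.1.2 with h' | h'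
        · exact absurd h' hq.2
        · exact h'
      refine ⟨(q.2, q.1), ?_, rfl⟩
      simp only [hD, Finset.mem_filter, Finset.mem_product]
      exact ⟨⟨⟨hq.1.1.2, hq.1.1.1⟩, fun hc => hq.1.2 hc.symm⟩, hlt⟩
  have h4 : (D.filter fun p => AT.cellLt p.1 p.2).card
      + (D.filter fun p => ¬ AT.cellLt p.1 p.2).card = D.card :=
    Finset.card_filter_add_card_filter_not _
  have h5 : (univ.filter fun p : Cell d × Cell d =>
      p.1 ℓ = 0 ∧ p.2 ℓ = 0 ∧ AT.cellLt p.1 p.2) = D.filter (fun p => AT.cellLt p.1 p.2) := by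
    ext p
    simp only [hD, hs, Finset.mem_filter, Finset.mem_product, Finset.mem_univ, true_and]
    constructor
    · rintro ⟨a1, a2, a3⟩
      exact ⟨⟨⟨a1, a2⟩, cellLt_ne a3⟩, a3⟩
    · rintro ⟨⟨⟨a1, a2⟩, -⟩, a3⟩
      exact ⟨a1, a2, a3⟩
  rw [h5]
  omega

lemma inv_sum (hd : 0 < d) {C : Cell d → ℕ} (h : AT.IsLatin d 2 n C) (ℓ : Fin d) :
    AT.sliceInv C ℓ 0 + AT.sliceInv C ℓ 1 =
      (univ.filter fun p : Cell d × Cell d =>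
        p.1 ℓ = 0 ∧ p.2 ℓ = 0 ∧ AT.cellLt p.1 p.2).card := by
  classical
  set P0 := univ.filter (fun p : Cell d × Cell d =>
    p.1 ℓ = 0 ∧ p.2 ℓ = 0 ∧ AT.cellLt p.1 p.2) with hP0
  have e0 : AT.sliceInv C ℓ 0 = (P0.filter fun p => C p.2 < C p.1).card := by
    rw [sliceInv_eq]
    apply congrArg Finset.card
    ext p
    simp only [hP0, Finset.mem_filter, Finset.mem_univ, true_and]
    constructor
    · rintro ⟨h1, h2, h3, h4, h5⟩
      exact ⟨⟨h1, h2, h3⟩, h5⟩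
    · rintro ⟨⟨h1, h2, h3⟩, h5⟩
      have := (h.1 p.2).1
      exact ⟨h1, h2, h3, by omega, h5⟩
  have e1 : AT.sliceInv C ℓ 1 = (P0.filter fun p => ¬ C p.2 < C p.1).card := by
    rw [sliceInv_eq]
    apply Finset.card_bij (fun p _ => (flip p.2, flip p.1))
    · intro p hp
      simp only [Finset.mem_filter, Finset.mem_univ, true_and] at hp
      obtain ⟨h1, h2, h3, h4, h5⟩ := hp
      have v1 : C (flip p.1) = C p.1 := flip_val hd h p.1
      have v2 : C (flip p.2) = C p.2 := flip_val hd h p.2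
      simp only [hP0, Finset.mem_filter, Finset.mem_univ, true_and]
      refine ⟨⟨?_, ?_, cellLt_flip h3⟩, ?_⟩
      · show p.2 ℓ + 1 = 0
        rw [h2]; decide
      · show p.1 ℓ + 1 = 0
        rw [h1]; decide
      · show ¬ C (flip p.1) < C (flip p.2)
        rw [v1, v2]
        omega
    · intro p hp q hq hpq
      have e1 : flip p.2 = flip q.2 := congrArg Prod.fst hpq
      have e2 : flip p.1 = flip q.1 := congrArg Prod.snd hpq
      have f1 : p.1 = q.1 := by rw [← flip_flip p.1, e2, flip_flip]
      have f2 : p.2 = q.2 := by rw [← flip_flip p.2, e1, flip_flip]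
      exact Prod.ext f1 f2
    · intro q hq
      simp only [hP0, Finset.mem_filter, Finset.mem_univ, true_and] at hq
      obtain ⟨⟨h1, h2, h3⟩, h4⟩ := hq
      have hne : C q.1 ≠ C q.2 := by
        intro hc
        obtain ⟨c, -, hcu⟩ := h.2 ℓ 0 (C q.1) (h.1 q.1).1 (h.1 q.1).2
        have := (hcu q.1 ⟨h1, rfl⟩).trans (hcu q.2 ⟨h2, hc.symm⟩).symm
        exact cellLt_ne h3 this
      have hlt : C q.1 < C q.2 := by omega
      refine ⟨(flip q.2, flip q.1), ?_, ?_⟩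
      · simp only [Finset.mem_filter, Finset.mem_univ, true_and]
        have v1 : C (flip q.1) = C q.1 := flip_val hd h q.1
        have v2 : C (flip q.2) = C q.2 := flip_val hd h q.2
        refine ⟨?_, ?_, cellLt_flip h3, ?_, ?_⟩
        · show q.2 ℓ + 1 = 1
          rw [h2]; decide
        · show q.1 ℓ + 1 = 1
          rw [h1]; decide
        · rw [v1]
          have := (h.1 q.1).1
          omega
        · rw [v1, v2]
          exact hlt
      · show (flip (flip q.1), flip (flip q.2)) = q
        rw [flip_flip, flip_flip]
  rw [e0, e1]
  exact Finset.card_filter_add_card_filter_not _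


lemma fullSgn_eq_one (hd : 2 ≤ d) {C : Cell d → ℕ}
    (h : AT.IsLatin d 2 (2 ^ (d - 1)) C) : AT.fullSgn C = 1 := by
  classical
  have hd0 : 0 < d := by omega
  set n := 2 ^ (d - 1) with hn
  -- each direction contributes (-1) ^ (sliceInv 0 + sliceInv 1)
  have hdir : ∀ ℓ : Fin d, AT.dirSgn C ℓ
      = (-1 : ℤ) ^ (AT.sliceInv C ℓ 0 + AT.sliceInv C ℓ 1) := by
    intro ℓ
    rw [AT.dirSgn, Fin.prod_univ_two, pow_add]
  have key : ∀ ℓ : Fin d, 2 * (AT.sliceInv C ℓ 0 + AT.sliceInv C ℓ 1) = n * n - n := by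
    intro ℓ
    rw [inv_sum hd0 h ℓ]
    exact pairs_card hd0 h ℓ
  -- evenness of each exponent or of the total
  have heven : ∀ ℓ : Fin d, Even (AT.sliceInv C ℓ 0 + AT.sliceInv C ℓ 1) ∨ Even d := by
    intro ℓ
    rcases Nat.even_or_odd d with hde | hdo
    · exact Or.inr hde
    · left
      have hd3 : 3 ≤ d := by
        rcases hdo with ⟨c, hc⟩
        omega
      set k := 2 ^ (d - 3) with hk
      have hnk : n = 4 * k := by
        rw [hn, hk, show (4 : ℕ) = 2 ^ 2 by norm_num, ← pow_add]
        congr 1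
        omega
      have hkey := key ℓ
      have hsq : n * n = 16 * (k * k) := by rw [hnk]; ring
      set K := k * k
      set t := AT.sliceInv C ℓ 0 + AT.sliceInv C ℓ 1
      have : 2 * t = 16 * K - 4 * k := by omega
      have hk1 : 1 ≤ k := Nat.one_le_two_pow
      have hKk : k ≤ 4 * K := by
        have h1 : k * 1 ≤ k * k := Nat.mul_le_mul_left k hk1
        nlinarith [h1]
      refine ⟨4 * K - k, by omega⟩
  rw [AT.fullSgn]
  rw [Finset.prod_congr rfl (fun ℓ _ => hdir ℓ)]
  rcases Nat.even_or_odd d with hde | hdo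
  · -- all exponents equal; product = ((-1)^t)^d = ((-1)^d)^t = 1
    have hall : ∀ ℓ : Fin d, AT.sliceInv C ℓ 0 + AT.sliceInv C ℓ 1
        = AT.sliceInv C ⟨0, hd0⟩ 0 + AT.sliceInv C ⟨0, hd0⟩ 1 := by
      intro ℓ
      have := key ℓ
      have := key ⟨0, hd0⟩
      omega
    set t := AT.sliceInv C ⟨0, hd0⟩ 0 + AT.sliceInv C ⟨0, hd0⟩ 1 with ht
    calc (∏ ℓ : Fin d, (-1 : ℤ) ^ (AT.sliceInv C ℓ 0 + AT.sliceInv C ℓ 1))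
        = ∏ ℓ : Fin d, (-1 : ℤ) ^ t := by
          exact Finset.prod_congr rfl (fun ℓ _ => by rw [hall ℓ])
      _ = ((-1 : ℤ) ^ t) ^ d := by rw [Finset.prod_const, Finset.card_univ, Fintype.card_fin]
      _ = ((-1 : ℤ) ^ d) ^ t := by rw [← pow_mul, ← pow_mul, Nat.mul_comm]
      _ = 1 := by rw [hde.neg_one_pow, one_pow]
  · -- each exponent is even
    apply Finset.prod_eq_one
    intro ℓ _
    rcases heven ℓ with he | he
    · exact he.neg_one_pow
    · exact absurd (Nat.not_odd_iff_even.mpr he) (by exact fun hc => hc hdo)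

lemma exists_latin (hd : 0 < d) :
    ∃ C : (Fin d → Fin 2) → Fin (2 ^ (d - 1) + 1),
      AT.IsLatin d 2 (2 ^ (d - 1)) (fun a => (C a : ℕ)) := by
  classical
  obtain ⟨m, rfl⟩ : ∃ m, d = m + 1 := ⟨d - 1, by omega⟩
  have hm : m + 1 - 1 = m := Nat.add_sub_cancel m 1
  set e : (Fin m → Fin 2) ≃ Fin (2 ^ m) := finFunctionFinEquiv with he
  set g : (Fin (m + 1) → Fin 2) → (Fin m → Fin 2) :=
    (fun a i => a i.succ + a 0) with hg
  refine ⟨fun a => ⟨(e (g a) : ℕ) + 1, by rw [hm]; have := (e (g a)).2; omega⟩, ?_, ?_⟩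
  · intro a
    constructor
    · simp
    · have := (e (g a)).2
      show (e (g a) : ℕ) + 1 ≤ 2 ^ (m + 1 - 1)
      rw [hm]
      omega
  · intro ℓ j v hv1 hv2
    rw [hm] at hv2
    -- the coding map is bijective
    set Φ : (Fin (m + 1) → Fin 2) → Fin 2 × (Fin m → Fin 2) :=
      (fun a => (a ℓ, g a)) with hΦ
    have hinj : Function.Injective Φ := by
      intro a b hab
      have h1 : a ℓ = b ℓ := congrArg Prod.fst hab
      have h2 : ∀ i : Fin m, a i.succ + a 0 = b i.succ + b 0 :=
        fun i => congrFun (congrArg Prod.snd hab) i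
      have h0 : a 0 = b 0 := by
        rcases Fin.eq_zero_or_eq_succ ℓ with rfl | ⟨i0, rfl⟩
        · exact h1
        · have := h2 i0
          rw [h1] at this
          exact (by decide : ∀ x y z : Fin 2, x + y = x + z → y = z) _ _ _ this
      funext i
      rcases Fin.eq_zero_or_eq_succ i with rfl | ⟨i0, rfl⟩
      · exact h0
      · have := h2 i0
        rw [h0] at this
        exact (by decide : ∀ x y z : Fin 2, x + z = y + z → x = y) _ _ _ this
    have hbij : Function.Bijective Φ := by
      rw [Fintype.bijective_iff_injective_and_card]
      refine ⟨hinj, ?_⟩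
      simp only [Fintype.card_prod, Fintype.card_fun, Fintype.card_fin]
      rw [pow_succ]
      ring
    set t : Fin (2 ^ m) := ⟨v - 1, by omega⟩ with ht
    obtain ⟨a, ha⟩ := hbij.2 (j, e.symm t)
    have ha1 : a ℓ = j := congrArg Prod.fst ha
    have ha2 : g a = e.symm t := congrArg Prod.snd ha
    refine ⟨a, ⟨ha1, ?_⟩, ?_⟩
    · show (e (g a) : ℕ) + 1 = v
      rw [ha2, Equiv.apply_symm_apply, ht]
      simp only
      omega
    · rintro b ⟨hb1, hb2⟩
      apply hinj
      rw [ha, hΦ]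
      simp only
      rw [hb1]
      congr 1
      have : (e (g b) : ℕ) + 1 = v := hb2
      have hval : (e (g b) : ℕ) = (t : ℕ) := by
        rw [ht]
        simp only
        omega
      have : e (g b) = t := Fin.ext hval
      rw [← this, Equiv.symm_apply_apply]
end ATProof

/-- For every `d ≥ 2`, every `d`-dimensional Latin hypercube of length `2`
has full sign `+1`, hence the Alon–Tarsi number `AT_d(2)` is positive and equals the number
of `d`-dimensional Latin hypercubes of length `2`. -/
theorem alon_tarsi_length_two (d : ℕ) (hd : 2 ≤ d) :
    (∀ C : (Fin d → Fin 2) → Fin (2 ^ (d - 1) + 1),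
      AT.IsLatin d 2 (2 ^ (d - 1)) (fun a => (C a : ℕ)) →
        AT.fullSgn (fun a => ((C a : ℕ))) = 1) ∧
    0 < (∑ C : (Fin d → Fin 2) → Fin (2 ^ (d - 1) + 1),
          if AT.IsLatin d 2 (2 ^ (d - 1)) (fun a => (C a : ℕ)) then
            AT.fullSgn (fun a => ((C a : ℕ))) else 0) ∧
    (∑ C : (Fin d → Fin 2) → Fin (2 ^ (d - 1) + 1),
        if AT.IsLatin d 2 (2 ^ (d - 1)) (fun a => (C a : ℕ)) then
          AT.fullSgn (fun a => ((C a : ℕ))) else 0)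
      = ((Finset.univ.filter fun C : (Fin d → Fin 2) → Fin (2 ^ (d - 1) + 1) =>
            AT.IsLatin d 2 (2 ^ (d - 1)) fun a => (C a : ℕ)).card : ℤ) := by
  classical
  have hone : ∀ C : (Fin d → Fin 2) → Fin (2 ^ (d - 1) + 1),
      AT.IsLatin d 2 (2 ^ (d - 1)) (fun a => (C a : ℕ)) →
        AT.fullSgn (fun a => ((C a : ℕ))) = 1 :=
    fun C hC => ATProof.fullSgn_eq_one hd hC
  have hsum : (∑ C : (Fin d → Fin 2) → Fin (2 ^ (d - 1) + 1),
        if AT.IsLatin d 2 (2 ^ (d - 1)) (fun a => (C a : ℕ)) then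
          AT.fullSgn (fun a => ((C a : ℕ))) else 0)
      = ((Finset.univ.filter fun C : (Fin d → Fin 2) → Fin (2 ^ (d - 1) + 1) =>
            AT.IsLatin d 2 (2 ^ (d - 1)) fun a => (C a : ℕ)).card : ℤ) := by
    rw [Finset.card_filter]
    push_cast
    apply Finset.sum_congr rfl
    intro C _
    by_cases hC : AT.IsLatin d 2 (2 ^ (d - 1)) (fun a => (C a : ℕ))
    · rw [if_pos hC, if_pos hC, hone C hC]
    · rw [if_neg hC, if_neg hC]
  refine ⟨hone, ?_, hsum⟩
  rw [hsum]
  have hpos : 0 < (Finset.univ.filter fun C : (Fin d → Fin 2) → Fin (2 ^ (d - 1) + 1) =>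
      AT.IsLatin d 2 (2 ^ (d - 1)) fun a => (C a : ℕ)).card := by
    obtain ⟨C0, hC0⟩ := ATProof.exists_latin (d := d) (Nat.lt_of_lt_of_le Nat.zero_lt_two hd)
    exact Finset.card_pos.mpr ⟨C0, Finset.mem_filter.mpr ⟨Finset.mem_univ _, hC0⟩⟩
  exact_mod_cast hpos
end

section
/- Let C be a d-dimensional Latin hypercube of length 2 (i.e. C : [2]^d → [2^{d-1}] with each slice a permutation). Then for every cell a ∈ [2]^d, C(a) = C(ā), where ā is the coordinatewise complement of a (i.e. ā_i = 3 − a_i). -/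
open scoped Classical

/-!
Two cells of a Latin hypercube carrying the same value cannot share any coordinate, since they
would then lie in a common slice. For length `2`, differing in every coordinate means being
complementary. Given a cell `a` (and `d ≥ 1`), the slice opposite to `a` in the first direction
contains a cell with the value `C a`; it differs from `a`, hence is the complement of `a`.
-/

namespace AT

theorem fin_two_eq_one_sub_iff_ne {x y : Fin 2} : y = 1 - x ↔ y ≠ x := by
  revert x y
  decide

variable {d k n : ℕ} {C : (Fin d → Fin k) → ℕ}

theorem IsLatin.exists_apply_eq (hC : IsLatin d k n C) (a : Fin d → Fin k) (ℓ : Fin d)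
    (j : Fin k) : ∃ b : Fin d → Fin k, b ℓ = j ∧ C b = C a :=
  (hC.2 ℓ j (C a) (hC.1 a).1 (hC.1 a).2).exists

theorem IsLatin.eq_of_apply_eq (hC : IsLatin d k n C) {a b : Fin d → Fin k} {ℓ : Fin d}
    (hℓ : b ℓ = a ℓ) (hab : C b = C a) : b = a :=
  (hC.2 ℓ (a ℓ) (C a) (hC.1 a).1 (hC.1 a).2).unique ⟨hℓ, hab⟩ ⟨rfl, rfl⟩

theorem IsLatin.eq_compl_of_apply_eq {C : (Fin d → Fin 2) → ℕ} (hC : IsLatin d 2 n C)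
    {a b : Fin d → Fin 2} (hab : C b = C a) (hne : b ≠ a) : b = fun i => 1 - a i :=
  funext fun _ => fin_two_eq_one_sub_iff_ne.2 fun hℓ => hne (hC.eq_of_apply_eq hℓ hab)

end AT

/-- In a `d`-dimensional Latin hypercube of length `2`, the value at any
cell equals the value at the coordinatewise complementary cell. -/
theorem latin_length_two_complement (d : ℕ) (C : (Fin d → Fin 2) → ℕ)
    (hC : AT.IsLatin d 2 (2 ^ (d - 1)) C) (a : Fin d → Fin 2) :
    C a = C (fun i => 1 - a i) := by
  rcases Nat.eq_zero_or_pos d with rfl | hd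
  · exact congrArg C (Subsingleton.elim _ _)
  · obtain ⟨b, hb₀, hab⟩ := hC.exists_apply_eq a ⟨0, hd⟩ (1 - a ⟨0, hd⟩)
    have hne : b ≠ a := fun h => AT.fin_two_eq_one_sub_iff_ne.1 hb₀ (congrFun h _)
    rw [← hC.eq_compl_of_apply_eq hab hne, hab]
end

section
/- Let d ≥ 3 be odd and let C be a partial Latin hypercube of length k whose type is a magic set T ⊆ [k]^d of cardinality nk with n > 1. If C' is obtained from C by exchanging two distinct values i ≠ j ∈ [n] (i.e. swapping the preimages of i and j), then sgn(C') = (−1)^{dk} · sgn(C). In particular, if both d and k are odd then sgn(C') = −sgn(C). -/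
/-!
Within a slice, let `a` and `b` be the cells carrying the values `i` and `j`. Exchanging `i` and
`j` changes the inversion status of the pair `{a, b}` and of each pair joining `a` or `b` to a
cell whose value lies strictly between `i` and `j`, and of no other pair. These are `1 + 2m`
pairs, `m` being the number of such cells, so the sign of every one of the `d k` slices flips.
-/

open scoped Classical

namespace AT

/-- `T` is a magic set with `n` cells in every slice (hence of cardinality `n·k`). -/
def IsMagic (d k n : ℕ) (T : Finset (Fin d → Fin k)) : Prop :=
  ∀ (ℓ : Fin d) (j : Fin k), (T.filter fun a => a ℓ = j).card = n

/-- `C` is a partial Latin hypercube of type `T` and cardinality `n·k`: it is supported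
exactly on `T`, takes values in `{0,…,n}`, and on every slice its nonzero values form
a permutation of `[n]`. -/
def IsPartialLatin (d k n : ℕ) (T : Finset (Fin d → Fin k)) (C : (Fin d → Fin k) → ℕ) : Prop :=
  (∀ a, a ∈ T ↔ C a ≠ 0) ∧ (∀ a, C a ≤ n) ∧
  ∀ (ℓ : Fin d) (j : Fin k) (v : ℕ), 1 ≤ v → v ≤ n →
    ∃! a : Fin d → Fin k, a ℓ = j ∧ C a = v

end AT

open Finset

namespace AT

section InversionParity

variable {α : Type*} [LinearOrder α]

def invCount (s : Finset α) (f : α → ℕ) : ℕ :=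
  #{p ∈ s ×ˢ s | p.1 < p.2 ∧ f p.2 ≠ 0 ∧ f p.2 < f p.1}

lemma card_filter_add_card_filter {β : Type*} (s : Finset β) (p q : β → Prop)
    [DecidablePred p] [DecidablePred q] :
    #{x ∈ s | p x} + #{x ∈ s | q x} =
      #{x ∈ s | ¬(p x ↔ q x)} + 2 * #{x ∈ s | p x ∧ q x} := by
  simp only [card_filter, mul_sum, ← sum_add_distrib]
  refine sum_congr rfl fun x _ => ?_
  by_cases hp : p x <;> by_cases hq : q x <;> simp [hp, hq]

lemma card_filter_lt_product_union_product {X Y : Finset α} (h : Disjoint X Y) :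
    #{p ∈ X ×ˢ Y ∪ Y ×ˢ X | p.1 < p.2} = #X * #Y := by
  have hne : ∀ p ∈ X ×ˢ Y, p.1 ≠ p.2 := fun p hp he =>
    disjoint_left.mp h (mem_product.mp hp).1 (he ▸ (mem_product.mp hp).2)
  have hswap : #{p ∈ Y ×ˢ X | p.1 < p.2} = #{p ∈ X ×ˢ Y | ¬p.1 < p.2} := by
    refine card_nbij' Prod.swap Prod.swap ?_ ?_ (fun _ _ => rfl) (fun _ _ => rfl) <;>
      rintro ⟨x, y⟩ hp <;> simp only [coe_filter, mem_product, Set.mem_ofPred_eq] at hp ⊢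
    · exact ⟨hp.1.symm, not_lt.mpr hp.2.le⟩
    · exact ⟨hp.1.symm,
        lt_of_le_of_ne (not_lt.mp hp.2) (hne (x, y) (mem_product.mpr hp.1)).symm⟩
  rw [filter_union,
    card_union_of_disjoint (disjoint_filter_filter (disjoint_product.mpr (Or.inl h))), hswap,
    card_filter_add_card_filter_not, card_product]

lemma card_filter_lt_pair_union {a b : α} {M : Finset α} (hab : a ≠ b)
    (hM : Disjoint {a, b} M) :
    #{p ∈ ({a} ×ˢ {b} ∪ {b} ×ˢ {a}) ∪ ({a, b} ×ˢ M ∪ M ×ˢ {a, b}) | p.1 < p.2} =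
      1 + 2 * #M := by
  rw [filter_union, card_union_of_disjoint, card_filter_lt_product_union_product,
    card_filter_lt_product_union_product hM, card_pair hab, card_singleton, card_singleton]
  · exact disjoint_singleton.mpr hab
  · refine disjoint_filter_filter ?_
    simp only [disjoint_union_left, disjoint_union_right, disjoint_product]
    rw [disjoint_insert_left, disjoint_singleton_left] at hM
    simp [hab, hab.symm, hM]

lemma not_swap_inversion_iff {i j : ℕ} (hi : i ≠ 0) (hj : j ≠ 0) (hij : i ≠ j) (u v : ℕ) :
    ¬((Equiv.swap i j v ≠ 0 ∧ Equiv.swap i j v < Equiv.swap i j u) ↔ (v ≠ 0 ∧ v < u)) ↔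
      (u = i ∧ v = j ∨ u = j ∧ v = i) ∨
        ((u = i ∨ u = j) ∧ min i j < v ∧ v < max i j) ∨
        ((min i j < u ∧ u < max i j) ∧ (v = i ∨ v = j)) := by
  rw [Equiv.swap_apply_def, Equiv.swap_apply_def]
  split_ifs <;> omega

lemma odd_invCount_swap_add_invCount {s : Finset α} {f : α → ℕ} {i j : ℕ}
    (hi : i ≠ 0) (hj : j ≠ 0) (hij : i ≠ j)
    (hfi : ∃! x, x ∈ s ∧ f x = i) (hfj : ∃! x, x ∈ s ∧ f x = j) :
    Odd (invCount s (fun x => Equiv.swap i j (f x)) + invCount s f) := by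
  obtain ⟨a, ⟨ha, hfa⟩, hua⟩ := hfi
  obtain ⟨b, ⟨hb, hfb⟩, hub⟩ := hfj
  set M := {c ∈ s | min i j < f c ∧ f c < max i j}
  have hab : a ≠ b := by rintro rfl; exact hij (hfa ▸ hfb)
  have hxa : ∀ x ∈ s, x = a ↔ f x = i := fun x hx =>
    ⟨fun h => h ▸ hfa, fun h => hua x ⟨hx, h⟩⟩
  have hxb : ∀ x ∈ s, x = b ↔ f x = j := fun x hx =>
    ⟨fun h => h ▸ hfb, fun h => hub x ⟨hx, h⟩⟩
  have hdisj : Disjoint ({a, b} : Finset α) M := by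
    simp only [disjoint_insert_left, disjoint_singleton_left, M, mem_filter, hfa, hfb]
    omega
  have hchanged : {p ∈ s ×ˢ s | p.1 < p.2 ∧
      ¬((Equiv.swap i j (f p.2) ≠ 0 ∧ Equiv.swap i j (f p.2) < Equiv.swap i j (f p.1)) ↔
        (f p.2 ≠ 0 ∧ f p.2 < f p.1))} =
      {p ∈ (({a} : Finset α) ×ˢ {b} ∪ {b} ×ˢ {a}) ∪
        (({a, b} : Finset α) ×ˢ M ∪ M ×ˢ {a, b}) | p.1 < p.2} := by
    ext ⟨x, y⟩
    simp only [mem_filter, mem_product, mem_union, mem_insert, mem_singleton, M,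
      not_swap_inversion_iff hi hj hij]
    by_cases hxs : x ∈ s
    · by_cases hys : y ∈ s
      · simp only [hxa x hxs, hxb x hxs, hxa y hys, hxb y hys, hxs, hys, true_and]
        exact and_comm
      · grind
    · grind
  have key := card_filter_add_card_filter {p ∈ s ×ˢ s | p.1 < p.2}
    (fun p => Equiv.swap i j (f p.2) ≠ 0 ∧ Equiv.swap i j (f p.2) < Equiv.swap i j (f p.1))
    (fun p => f p.2 ≠ 0 ∧ f p.2 < f p.1)
  simp only [filter_filter] at key
  rw [hchanged, card_filter_lt_pair_union hab hdisj] at key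
  unfold invCount
  rw [key]
  exact Nat.odd_iff.mpr (by omega)

end InversionParity

/-- `cellLt` is definitionally the lexicographic order `<` on `Lex (Fin d → Fin k)`. -/
lemma sliceInv_eq_invCount {d k : ℕ} (C : (Fin d → Fin k) → ℕ) (ℓ : Fin d) (c : Fin k) :
    sliceInv C ℓ c =
      invCount {x : Lex (Fin d → Fin k) | ofLex x ℓ = c} (fun x => C (ofLex x)) := by
  rw [sliceInv, invCount, ← Set.ncard_coe_finset]
  congr 1
  ext ⟨x, y⟩
  simp only [Set.mem_ofPred_eq, coe_filter, mem_product, mem_filter, mem_univ, true_and]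
  exact and_assoc.symm

lemma odd_sliceInv_swap_add_sliceInv {d k n : ℕ} {C : (Fin d → Fin k) → ℕ}
    (hC : ∀ (ℓ : Fin d) (j : Fin k) (v : ℕ), 1 ≤ v → v ≤ n →
      ∃! a : Fin d → Fin k, a ℓ = j ∧ C a = v)
    {i j : ℕ} (hi1 : 1 ≤ i) (hin : i ≤ n) (hj1 : 1 ≤ j) (hjn : j ≤ n) (hij : i ≠ j)
    (ℓ : Fin d) (c : Fin k) :
    Odd (sliceInv (fun a => Equiv.swap i j (C a)) ℓ c + sliceInv C ℓ c) := by
  rw [sliceInv_eq_invCount, sliceInv_eq_invCount]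
  refine odd_invCount_swap_add_invCount (by omega) (by omega) hij ?_ ?_
  all_goals simp only [mem_filter, mem_univ, true_and]
  exacts [hC ℓ c i hi1 hin, hC ℓ c j hj1 hjn]

lemma neg_one_pow_eq_neg_of_odd_add {m n : ℕ} (h : Odd (m + n)) :
    (-1 : ℤ) ^ m = -(-1) ^ n := by
  rcases Nat.even_or_odd n with hn | hn
  · rw [((Nat.odd_add.mp h).mpr hn).neg_one_pow, hn.neg_one_pow]
  · rw [((Nat.odd_add'.mp h).mp hn).neg_one_pow, hn.neg_one_pow, neg_neg]

lemma fullSgn_eq_neg_one_pow_mul_of_odd {d k : ℕ} {C C' : (Fin d → Fin k) → ℕ}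
    (h : ∀ ℓ c, Odd (sliceInv C' ℓ c + sliceInv C ℓ c)) :
    fullSgn C' = (-1) ^ (d * k) * fullSgn C := by
  have hslice : ∀ ℓ c, (-1 : ℤ) ^ sliceInv C' ℓ c = -1 * (-1) ^ sliceInv C ℓ c := by
    intro ℓ c
    rw [neg_one_pow_eq_neg_of_odd_add (h ℓ c), neg_one_mul]
  simp only [fullSgn, dirSgn, hslice, prod_mul_distrib, prod_const, card_univ, Fintype.card_fin,
    ← pow_mul, mul_comm k]

end AT

theorem partial_latin_swap_sign_general (d k n : ℕ) (hd : Odd d)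
    (T : Finset (Fin d → Fin k))
    (C : (Fin d → Fin k) → ℕ) (hC : AT.IsPartialLatin d k n T C)
    (i j : ℕ) (hi1 : 1 ≤ i) (hin : i ≤ n) (hj1 : 1 ≤ j) (hjn : j ≤ n) (hij : i ≠ j) :
    AT.fullSgn (fun a => if C a = i then j else if C a = j then i else C a)
        = (-1 : ℤ) ^ (d * k) * AT.fullSgn C ∧
      (Odd k →
        AT.fullSgn (fun a => if C a = i then j else if C a = j then i else C a)
          = -AT.fullSgn C) := by
  simp only [← Equiv.swap_apply_def]
  have hswap := AT.fullSgn_eq_neg_one_pow_mul_of_odd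
    (AT.odd_sliceInv_swap_add_sliceInv hC.2.2 hi1 hin hj1 hjn hij)
  exact ⟨hswap, fun hk => by rw [hswap, (hd.mul hk).neg_one_pow, neg_one_mul]⟩

/-- Exchanging two distinct values `i ≠ j ∈ [n]` in a partial Latin
hypercube of type a magic set `T` (of cardinality `nk`) multiplies the full sign by
`(−1)^(dk)`; in particular, if both `d` and `k` are odd the sign is reversed. -/
theorem partial_latin_swap_sign (d k n : ℕ) (hd3 : 3 ≤ d) (hd : Odd d) (hn : 1 < n)
    (T : Finset (Fin d → Fin k)) (hT : AT.IsMagic d k n T)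
    (C : (Fin d → Fin k) → ℕ) (hC : AT.IsPartialLatin d k n T C)
    (i j : ℕ) (hi1 : 1 ≤ i) (hin : i ≤ n) (hj1 : 1 ≤ j) (hjn : j ≤ n) (hij : i ≠ j) :
    AT.fullSgn (fun a => if C a = i then j else if C a = j then i else C a)
        = (-1 : ℤ) ^ (d * k) * AT.fullSgn C ∧
      (Odd k →
        AT.fullSgn (fun a => if C a = i then j else if C a = j then i else C a)
          = -AT.fullSgn C) :=
  partial_latin_swap_sign_general d k n hd T C hC i j hi1 hin hj1 hjn hij
end

section
/- Let d and k both be odd and n > 1. Then AT_d(k,T) = 0 for every magic set T ⊆ [k]^d of cardinality nk, where AT_d(k,T) is the signed sum of sgn(C) over all partial Latin hypercubes C of type T. In particular AT_d(k) = 0 for odd d,k. -/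
open scoped Classical

/-!
Exchanging the symbols `m` and `m + 1` (here `1` and `2`) maps partial Latin hypercubes of type
`T` bijectively to themselves. Within a slice, the cells holding `m` and `m + 1` form the only pair
whose relative order changes, so every slice permutation changes sign. There are `d * k` slices,
so `sgn` is multiplied by `(-1) ^ (d * k) = -1` and the terms of `AT_d(k,T)` cancel in pairs.
-/

open Equiv

namespace AT

theorem cellLt_iff_toLex_lt {d k : ℕ} {a b : Fin d → Fin k} : cellLt a b ↔ toLex a < toLex b :=
  Iff.rfl

theorem swap_lt_swap_iff_of_ne_adjacent {m x y : ℕ} (hxy : ¬(x = m ∧ y = m + 1))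
    (hyx : ¬(y = m ∧ x = m + 1)) : swap m (m + 1) x < swap m (m + 1) y ↔ x < y := by
  simp only [swap_apply_def]
  split_ifs <;> omega

theorem swap_apply_eq_zero_iff {m x : ℕ} (hm : m ≠ 0) : swap m (m + 1) x = 0 ↔ x = 0 := by
  rw [swap_apply_eq_iff, swap_apply_of_ne_of_ne hm.symm m.succ_ne_zero.symm]

theorem sum_perm_comp_eq_zero {ι α M : Type*} [Fintype ι] [DecidableEq ι] [Fintype α]
    [AddCommGroup M] [IsAddTorsionFree M] (σ : Perm α) (f : (ι → α) → M)
    (hf : ∀ C, f (σ ∘ C) = -f C) : ∑ C, f C = 0 := by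
  have hreindex := Fintype.sum_equiv (Equiv.piCongrRight fun _ => σ) (fun C => f (σ ∘ C)) f
    fun _ => rfl
  simp only [hf, Finset.sum_neg_distrib] at hreindex
  exact neg_eq_self.mp hreindex

section Swap

variable {d k : ℕ} (C : (Fin d → Fin k) → ℕ) (ℓ : Fin d) (j : Fin k)

theorem sliceInv_swap_comp_of_cellLt {m : ℕ} (hm : m ≠ 0) {a b : Fin d → Fin k}
    (ha : ∀ c, c ℓ = j → (C c = m ↔ c = a)) (hb : ∀ c, c ℓ = j → (C c = m + 1 ↔ c = b))
    (haj : a ℓ = j) (hbj : b ℓ = j) (hab : cellLt a b) :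
    sliceInv (swap m (m + 1) ∘ C) ℓ j = sliceInv C ℓ j + 1 := by
  have hCa : C a = m := (ha a haj).2 rfl
  have hCb : C b = m + 1 := (hb b hbj).2 rfl
  have hba : ¬cellLt b a := (cellLt_iff_toLex_lt.mp hab).asymm
  unfold sliceInv
  -- the inversions of `swap m (m + 1) ∘ C` are those of `C` together with `(a, b)`
  rw [← Set.ncard_insert_of_notMem (a := (a, b)) (by simp [hCa, hCb]) (Set.toFinite _)]
  congr 1
  ext ⟨p, q⟩
  simp only [Set.mem_insert_iff, Set.mem_ofPred_eq, Prod.mk.injEq, Function.comp_apply]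
  constructor
  · rintro ⟨hpj, hqj, hpq, hq0, hlt⟩
    by_cases hpair : C p = m ∧ C q = m + 1
    · exact .inl ⟨(ha p hpj).1 hpair.1, (hb q hqj).1 hpair.2⟩
    by_cases hpair' : C q = m ∧ C p = m + 1
    · rw [(hb p hpj).1 hpair'.2, (ha q hqj).1 hpair'.1] at hpq
      exact absurd hpq hba
    exact .inr ⟨hpj, hqj, hpq, (swap_apply_eq_zero_iff hm).not.mp hq0,
      (swap_lt_swap_iff_of_ne_adjacent hpair' hpair).mp hlt⟩
  · rintro (⟨rfl, rfl⟩ | ⟨hpj, hqj, hpq, hq0, hlt⟩)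
    · simp [hCa, hCb, haj, hbj, hab, hm]
    have hpair : ¬(C p = m ∧ C q = m + 1) := fun h => by omega
    have hpair' : ¬(C q = m ∧ C p = m + 1) := fun h => by
      rw [(hb p hpj).1 h.2, (ha q hqj).1 h.1] at hpq
      exact hba hpq
    exact ⟨hpj, hqj, hpq, (swap_apply_eq_zero_iff hm).not.mpr hq0,
      (swap_lt_swap_iff_of_ne_adjacent hpair' hpair).mpr hlt⟩

theorem neg_one_pow_sliceInv_swap_comp {m : ℕ} (hm : m ≠ 0) (h₁ : ∃! a, a ℓ = j ∧ C a = m)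
    (h₂ : ∃! a, a ℓ = j ∧ C a = m + 1) :
    (-1 : ℤ) ^ sliceInv (swap m (m + 1) ∘ C) ℓ j = -(-1) ^ sliceInv C ℓ j := by
  obtain ⟨a, ⟨haj, hCa⟩, ha⟩ := h₁
  obtain ⟨b, ⟨hbj, hCb⟩, hb⟩ := h₂
  have ha' : ∀ c, c ℓ = j → (C c = m ↔ c = a) :=
    fun c hc => ⟨fun h => ha c ⟨hc, h⟩, by rintro rfl; exact hCa⟩
  have hb' : ∀ c, c ℓ = j → (C c = m + 1 ↔ c = b) :=
    fun c hc => ⟨fun h => hb c ⟨hc, h⟩, by rintro rfl; exact hCb⟩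
  rcases lt_trichotomy (toLex a) (toLex b) with hab | hab | hba
  · rw [sliceInv_swap_comp_of_cellLt C ℓ j hm ha' hb' haj hbj hab, pow_succ]
    ring
  · cases toLex.injective hab
    omega
  · have hinv : swap m (m + 1) ∘ (swap m (m + 1) ∘ C) = C :=
      funext fun _ => swap_apply_self _ _ _
    have h := sliceInv_swap_comp_of_cellLt (swap m (m + 1) ∘ C) ℓ j hm
      (fun c hc => by rw [Function.comp_apply, swap_apply_eq_iff, swap_apply_left, hb' c hc])
      (fun c hc => by rw [Function.comp_apply, swap_apply_eq_iff, swap_apply_right, ha' c hc])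
      hbj haj hba
    rw [hinv] at h
    rw [h, pow_succ]
    ring

theorem fullSgn_swap_comp {n m : ℕ} {T : Finset (Fin d → Fin k)} (hC : IsPartialLatin d k n T C)
    (hm : m ≠ 0) (hmn : m + 1 ≤ n) :
    fullSgn (swap m (m + 1) ∘ C) = (-1) ^ (d * k) * fullSgn C := by
  have hslice ℓ j := neg_one_pow_sliceInv_swap_comp C ℓ j hm
    (hC.2.2 ℓ j m (by omega) (by omega)) (hC.2.2 ℓ j (m + 1) (by omega) hmn)
  simp only [fullSgn, dirSgn, hslice, Finset.prod_neg, Finset.prod_mul_distrib, Finset.prod_const,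
    Finset.card_univ, Fintype.card_fin, pow_mul']

end Swap

theorem IsPartialLatin.perm_comp {d k n : ℕ} {T : Finset (Fin d → Fin k)}
    {C : (Fin d → Fin k) → ℕ} (hC : IsPartialLatin d k n T C) (σ : Perm ℕ) (hσ₀ : σ 0 = 0)
    (hσn : ∀ v, σ v ≤ n ↔ v ≤ n) : IsPartialLatin d k n T (σ ∘ C) := by
  obtain ⟨hsupp, hle, hslice⟩ := hC
  refine ⟨fun a => (hsupp a).trans (σ.injective.eq_iff' hσ₀).not.symm,
    fun a => (hσn _).mpr (hle a), fun ℓ j v hv₁ hvn => ?_⟩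
  have hw₀ : σ.symm v ≠ 0 := by
    rw [Ne, σ.symm_apply_eq, hσ₀]
    omega
  have hwn : σ.symm v ≤ n := (hσn _).mp (by rwa [σ.apply_symm_apply])
  simpa only [Function.comp_apply, ← σ.eq_symm_apply] using
    hslice ℓ j (σ.symm v) (Nat.one_le_iff_ne_zero.mpr hw₀) hwn

theorem isPartialLatin_swap_comp_iff {d k n m : ℕ} {T : Finset (Fin d → Fin k)}
    {C : (Fin d → Fin k) → ℕ} (hm : m ≠ 0) (hmn : m + 1 ≤ n) :
    IsPartialLatin d k n T (swap m (m + 1) ∘ C) ↔ IsPartialLatin d k n T C := by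
  have hswap₀ : swap m (m + 1) 0 = 0 := (swap_apply_eq_zero_iff hm).mpr rfl
  have hswapn (v : ℕ) : swap m (m + 1) v ≤ n ↔ v ≤ n := by
    rw [swap_apply_def]
    split_ifs <;> omega
  refine ⟨fun h => ?_, fun h => h.perm_comp _ hswap₀ hswapn⟩
  simpa only [Function.comp_def, swap_apply_self] using h.perm_comp _ hswap₀ hswapn

end AT

theorem alon_tarsi_partial_odd_zero_general (d k n : ℕ) (hd : Odd d) (hk : Odd k) (hn : 1 < n)
    (T : Finset (Fin d → Fin k)) :
    (∑ C : (Fin d → Fin k) → Fin (n + 1),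
        if AT.IsPartialLatin d k n T (fun a => (C a : ℕ)) then
          AT.fullSgn (fun a => ((C a : ℕ))) else 0) = 0 := by
  let σ : Perm (Fin (n + 1)) := swap ⟨1, by omega⟩ ⟨2, by omega⟩
  have hσ (C : (Fin d → Fin k) → Fin (n + 1)) :
      (fun a => ((σ ∘ C) a : ℕ)) = swap 1 (1 + 1) ∘ fun a => (C a : ℕ) :=
    funext fun a => (Fin.val_injective.swap_apply _ _ _).symm
  refine AT.sum_perm_comp_eq_zero σ _ fun C => ?_
  rw [hσ C]
  have hswap := AT.isPartialLatin_swap_comp_iff (T := T) (C := fun a => (C a : ℕ)) one_ne_zero hn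
  by_cases hC : AT.IsPartialLatin d k n T fun a => (C a : ℕ)
  · rw [if_pos (hswap.mpr hC), if_pos hC, AT.fullSgn_swap_comp _ hC one_ne_zero hn,
      (hd.mul hk).neg_one_pow, neg_one_mul]
  · rw [if_neg (hswap.not.mpr hC), if_neg hC, neg_zero]

/-- If `d` and `k` are both odd and `n > 1`, then for every magic set
`T ⊆ [k]^d` of cardinality `nk` the signed sum `AT_d(k,T)` over all partial Latin
hypercubes of type `T` vanishes. -/
theorem alon_tarsi_partial_odd_zero (d k n : ℕ) (hd : Odd d) (hk : Odd k) (hn : 1 < n)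
    (T : Finset (Fin d → Fin k)) (hT : AT.IsMagic d k n T) :
    (∑ C : (Fin d → Fin k) → Fin (n + 1),
        if AT.IsPartialLatin d k n T (fun a => (C a : ℕ)) then
          AT.fullSgn (fun a => ((C a : ℕ))) else 0) = 0 :=
  alon_tarsi_partial_odd_zero_general d k n hd hk hn T
end

section
/- Let T be a d × M balanced table and i < j ≤ M. Then Δ_T = (−1)^ℓ Δ_{(i,j)T}, where (i,j)T is T with columns i and j swapped and ℓ = Σ_{m=1}^d ( #{c ∈ [i,j] : T_{m,i} = T_{m,c}} + #{c ∈ [i,j] : T_{m,j} = T_{m,c}} − δ_{T_{m,i},T_{m,j}} ). -/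
open scoped Classical

/-- Sign contribution of one row `t` of a balanced table with `K` blocks: the product, over
the blocks of positions carrying equal entry `v ∈ {0,…,K−1}`, of the sign of the sequence of
`σ`-values read along the block in increasing position order (`0` if this sequence is not a
permutation of `[n_i]`); the sign of a permutation is computed as `(−1)^inversions`. -/
noncomputable def rowSgn (M ni K : ℕ) (t : Fin M → ℕ) (σ : Fin M → Fin ni) : ℤ :=
  ∏ v ∈ Finset.range K,
    if ∀ x : Fin ni, ∃! p : Fin M, t p = v ∧ σ p = x then
      (-1 : ℤ) ^ Set.ncard {pq : Fin M × Fin M |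
        pq.1 < pq.2 ∧ t pq.1 = v ∧ t pq.2 = v ∧ σ pq.2 < σ pq.1}
    else 0

/-- The invariant polynomial `Δ_T` of a `d × M` balanced table `T` (with entries of row `i`
in `{0,…,M/n_i − 1}`), as a function of hypermatrices `X` of format `n_1 × ⋯ × n_d`:
`Δ_T(X) = Σ_{σ_1,…,σ_d} ∏_i sgn_{T_i}(σ_i) · ∏_{p=1}^M X_{σ_1(p),…,σ_d(p)}`. -/
noncomputable def Delta (d M : ℕ) (n : Fin d → ℕ) (T : Fin d → Fin M → ℕ)
    (X : ((i : Fin d) → Fin (n i)) → ℂ) : ℂ :=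
  ∑ σ : (i : Fin d) → Fin M → Fin (n i),
    ((∏ i, rowSgn M (n i) (M / n i) (T i) (σ i) : ℤ) : ℂ) *
      ∏ p : Fin M, X fun i => σ i p

/-- `T` is a `d × M` balanced table for the format `n`: row `i` has entries in
`{0,…,M/n_i − 1}` and contains each such value exactly `n i` times. -/
def IsBalanced (d M : ℕ) (n : Fin d → ℕ) (T : Fin d → Fin M → ℕ) : Prop :=
  ∀ i : Fin d, (∀ p, T i p < M / n i) ∧
    ∀ v : ℕ, v < M / n i → Set.ncard {p : Fin M | T i p = v} = n i

/-!
Swapping columns `i < j` and reindexing the summation variables `σ_m ↦ σ_m ∘ (i j)` turns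
`Δ_{(i,j)T}` into `Δ_T`, term by term, up to the change of the row signs. Writing a row sign as
`(-1)` to the number of pairs in a common block ordered one way by position and the other way by
`σ`, the change of position order by `(i j)` multiplies it by `(-1)` to the number of pairs in a
common block that `(i j)` reverses: this is multiplicativity of the sign, since for three linear
orders on a pair `{a, b}` an even number of the three pairs of orders disagree on it. The pairs
reversed by `(i j)` are `(i, c)` with `i < c ≤ j` and `(c, j)` with `i < c < j`, which gives
`ℓ_m - 2` of them in row `m`.
-/

open Finset Function

lemma prod_ite_neg_one {ι : Type*} [Fintype ι] (p : ι → Prop) [DecidablePred p] :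
    ∏ x : ι, (if p x then (-1 : ℤ) else 1) = (-1) ^ #{x | p x} := by
  rw [prod_ite, prod_const, prod_const_one, mul_one]

section ClassInversions

variable {ι κ α β : Type*} [Fintype ι] [DecidableEq κ] [LinearOrder α] [LinearOrder β]

noncomputable def classInvSign (t : ι → κ) (u : ι → α) (f : ι → β) : ℤ :=
  ∏ x : ι × ι, if u x.1 < u x.2 ∧ t x.1 = t x.2 ∧ f x.2 < f x.1 then -1 else 1

lemma classInvSign_comp_equiv {ι' : Type*} [Fintype ι'] (e : ι' ≃ ι) (t : ι → κ) (u : ι → α)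
    (f : ι → β) : classInvSign (t ∘ e) (u ∘ e) (f ∘ e) = classInvSign t u f :=
  Fintype.prod_equiv (e.prodCongr e) _ _ fun _ => rfl

lemma prod_ite_lt_eq_mul {γ : Type*} [CommMonoid γ] (u : ι → α) {v : ι → β} (hv : Injective v)
    (g : ι → ι → γ) :
    ∏ x : ι × ι, (if u x.1 < u x.2 then g x.1 x.2 else 1) =
      (∏ x : ι × ι, if u x.1 < u x.2 ∧ v x.1 < v x.2 then g x.1 x.2 else 1) *
        ∏ x : ι × ι, if u x.1 < u x.2 ∧ v x.2 < v x.1 then g x.1 x.2 else 1 := by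
  rw [← prod_mul_distrib]
  refine Fintype.prod_congr _ _ fun x => ?_
  by_cases hu : u x.1 < u x.2
  · have hne : v x.1 ≠ v x.2 := hv.ne fun h => hu.ne (congrArg u h)
    rcases hne.lt_or_gt with h | h <;> simp [hu, h, h.not_gt]
  · simp [hu]

lemma prod_ite_lt_congr_of_symm {γ : Type*} [CommMonoid γ] {u : ι → α} {v : ι → β}
    (hu : Injective u) (hv : Injective v) (g : ι → ι → γ) (hg : ∀ a b, g a b = g b a) :
    ∏ x : ι × ι, (if u x.1 < u x.2 then g x.1 x.2 else 1) =
      ∏ x : ι × ι, (if v x.1 < v x.2 then g x.1 x.2 else 1) := by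
  rw [prod_ite_lt_eq_mul u hv, prod_ite_lt_eq_mul v hu]
  congr 1
  · simp only [and_comm]
  · exact Fintype.prod_equiv (Equiv.prodComm ι ι) _ _ fun x => by simp [hg x.1 x.2, and_comm]

lemma classInvSign_eq_mul {t : ι → κ} {u : ι → α} {f : ι → β} (v : ι → α) (hu : Injective u)
    (hv : Injective v) (hf : ∀ a b, t a = t b → f a = f b → a = b) :
    classInvSign t u f = classInvSign t v u * classInvSign t v f := by
  let g a b : ℤ := if t a = t b ∧ ¬(u a < u b ↔ f a < f b) then -1 else 1
  have hne : ∀ a b, a ≠ b → t a = t b → u a ≠ u b ∧ f a ≠ f b := fun a b hab ht =>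
    ⟨hu.ne hab, fun h => hab (hf a b ht h)⟩
  have hg : ∀ a b, g a b = g b a := by
    intro a b
    by_cases ht : t a = t b
    · by_cases hab : a = b
      · rw [hab]
      obtain ⟨hua, hfa⟩ := hne a b hab ht
      rcases hua.lt_or_gt with h1 | h1 <;> rcases hfa.lt_or_gt with h2 | h2 <;>
        simp [g, ht, h1, h2, h1.not_gt, h2.not_gt]
    · simp [g, ht, Ne.symm ht]
  calc classInvSign t u f = ∏ x : ι × ι, if u x.1 < u x.2 then g x.1 x.2 else 1 := by
        refine Fintype.prod_congr _ _ fun x => ?_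
        by_cases ht : t x.1 = t x.2
        · by_cases h1 : u x.1 < u x.2
          · have hfa := (hne _ _ (fun h => h1.ne (congrArg u h)) ht).2
            rcases hfa.lt_or_gt with h2 | h2 <;> simp [g, ht, h1, h2, h2.not_gt]
          · simp [h1]
        · simp [g, ht]
    _ = ∏ x : ι × ι, if v x.1 < v x.2 then g x.1 x.2 else 1 :=
        prod_ite_lt_congr_of_symm hu hv g hg
    _ = classInvSign t v u * classInvSign t v f := by
        rw [classInvSign, classInvSign, ← prod_mul_distrib]
        refine Fintype.prod_congr _ _ fun x => ?_
        by_cases h0 : v x.1 < v x.2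
        · by_cases ht : t x.1 = t x.2
          · obtain ⟨hua, hfa⟩ := hne _ _ (fun h => h0.ne (congrArg v h)) ht
            rcases hua.lt_or_gt with h1 | h1 <;> rcases hfa.lt_or_gt with h2 | h2 <;>
              simp [g, ht, h0, h1, h2, h1.not_gt, h2.not_gt]
          · simp [g, ht]
        · simp [h0]

end ClassInversions

section SwapInversions

variable {M : ℕ} {i j : Fin M}

lemma swap_lt_swap_iff_of_lt (hij : i < j) {a b : Fin M} (hab : a < b) :
    Equiv.swap i j b < Equiv.swap i j a ↔ a = i ∧ b ≤ j ∨ i < a ∧ a < j ∧ b = j := by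
  simp only [Equiv.swap_apply_def]
  split_ifs <;> simp only [Fin.lt_def, Fin.le_def, Fin.ext_iff] at * <;> omega

lemma card_classInversions_swap {κ : Type*} [DecidableEq κ] (t : Fin M → κ) (hij : i < j) :
    #{x : Fin M × Fin M | x.1 < x.2 ∧ t x.1 = t x.2 ∧ Equiv.swap i j x.2 < Equiv.swap i j x.1} =
      #{c ∈ Ioc i j | t i = t c} + #{c ∈ Ioo i j | t j = t c} := by
  rw [← card_map (Embedding.sectR i (Fin M)), ← card_map (Embedding.sectL (Fin M) j),
    ← card_union_of_disjoint]
  · congr 1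
    ext ⟨a, b⟩
    simp only [mem_filter, mem_univ, true_and, mem_union, mem_map, mem_Ioc, mem_Ioo,
      Embedding.sectR_apply, Embedding.sectL_apply, Prod.mk.injEq]
    constructor
    · rintro ⟨hab, ht, hs⟩
      rcases (swap_lt_swap_iff_of_lt hij hab).1 hs with ⟨rfl, hb⟩ | ⟨ha, ha', rfl⟩
      · exact Or.inl ⟨b, ⟨⟨hab, hb⟩, ht⟩, rfl, rfl⟩
      · exact Or.inr ⟨a, ⟨⟨ha, ha'⟩, ht.symm⟩, rfl, rfl⟩
    · rintro (⟨b, ⟨⟨hib, hb⟩, ht⟩, rfl, rfl⟩ | ⟨a, ⟨⟨ha, ha'⟩, ht⟩, rfl, rfl⟩)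
      · exact ⟨hib, ht, (swap_lt_swap_iff_of_lt hij hib).2 (Or.inl ⟨rfl, hb⟩)⟩
      · exact ⟨ha', ht.symm, (swap_lt_swap_iff_of_lt hij ha').2 (Or.inr ⟨ha, ha', rfl⟩)⟩
  · simp only [disjoint_left, mem_map, mem_filter, mem_Ioo, Embedding.sectR_apply,
      Embedding.sectL_apply]
    rintro _ ⟨b, -, rfl⟩ ⟨a, ⟨⟨ha, -⟩, -⟩, h⟩
    exact ha.ne' (Prod.mk.inj h).1

def swapExponent {κ : Type*} [DecidableEq κ] (t : Fin M → κ) (i j : Fin M) : ℕ :=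
  #{c ∈ Icc i j | t i = t c} + #{c ∈ Icc i j | t j = t c} - if t i = t j then 1 else 0

lemma swapExponent_eq {κ : Type*} [DecidableEq κ] (t : Fin M → κ) (hij : i < j) :
    swapExponent t i j =
      #{x : Fin M × Fin M | x.1 < x.2 ∧ t x.1 = t x.2 ∧ Equiv.swap i j x.2 < Equiv.swap i j x.1}
        + 2 := by
  rw [card_classInversions_swap t hij, swapExponent, Icc_eq_cons_Ioc hij.le, filter_cons,
    if_pos rfl, card_cons, ← Icc_eq_cons_Ioc hij.le, Icc_eq_cons_Ico hij.le, filter_cons,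
    if_pos rfl, card_cons, Ico_eq_cons_Ioo hij, filter_cons]
  by_cases h : t i = t j
  · rw [if_pos h.symm, card_cons, if_pos h]; omega
  · rw [if_neg (Ne.symm h), if_neg h]; omega

lemma classInvSign_id_swap {κ : Type*} [DecidableEq κ] (t : Fin M → κ) (hij : i < j) :
    classInvSign t id (Equiv.swap i j) = (-1) ^ swapExponent t i j := by
  rw [swapExponent_eq t hij, pow_add, neg_one_sq, mul_one, classInvSign, ← prod_ite_neg_one]
  rfl

end SwapInversions

section RowSign

variable {M ni K : ℕ} {t : Fin M → ℕ} {σ : Fin M → Fin ni}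

def BlocksBijective (K : ℕ) (t : Fin M → ℕ) (σ : Fin M → Fin ni) : Prop :=
  ∀ v < K, ∀ x : Fin ni, ∃! p : Fin M, t p = v ∧ σ p = x

lemma blocksBijective_comp_perm (e : Equiv.Perm (Fin M)) :
    BlocksBijective K (fun p => t (e p)) (fun p => σ (e p)) ↔ BlocksBijective K t σ :=
  forall₂_congr fun v _ => forall_congr' fun x =>
    e.existsUnique_congr_right (q := fun p => t p = v ∧ σ p = x)

lemma BlocksBijective.eq_of_eq (h : BlocksBijective K t σ) (hK : ∀ p, t p < K) {a b : Fin M}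
    (ht : t a = t b) (hσ : σ a = σ b) : a = b :=
  (h (t a) (hK a) (σ a)).unique ⟨rfl, rfl⟩ ⟨ht.symm, hσ.symm⟩

lemma rowSgn_eq_ite (hK : ∀ p, t p < K) :
    rowSgn M ni K t σ = if BlocksBijective K t σ then classInvSign t id σ else 0 := by
  unfold rowSgn
  split_ifs with h
  · calc _ = ∏ v ∈ range K, ∏ x : Fin M × Fin M,
          if x.1 < x.2 ∧ t x.1 = v ∧ t x.2 = v ∧ σ x.2 < σ x.1 then (-1 : ℤ) else 1 := by
          refine prod_congr rfl fun v hv => ?_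
          rw [if_pos (h v (mem_range.1 hv)), prod_ite_neg_one, ← Set.ncard_coe_finset,
            coe_filter_univ]
      _ = ∏ x : Fin M × Fin M, ∏ v ∈ range K,
          if t x.1 = v then
            (if x.1 < x.2 ∧ t x.1 = t x.2 ∧ σ x.2 < σ x.1 then (-1 : ℤ) else 1) else 1 := by
          rw [prod_comm]
          refine Fintype.prod_congr _ _ fun x => prod_congr rfl fun v _ => ?_
          by_cases hv : t x.1 = v
          · subst hv; simp only [true_and, if_true, eq_comm (a := t x.2)]
          · simp [hv]
      _ = classInvSign t id σ := by
          simp only [prod_ite_eq, mem_range, hK, if_true]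
          rfl
  · simp only [BlocksBijective, not_forall] at h
    obtain ⟨v, hv, hx⟩ := h
    exact prod_eq_zero (mem_range.2 hv) (if_neg (not_forall.2 hx))

lemma rowSgn_comp_swap (hK : ∀ p, t p < K) {i j : Fin M} (hij : i < j) :
    rowSgn M ni K (fun p => t (Equiv.swap i j p)) (fun p => σ (Equiv.swap i j p)) =
      (-1) ^ swapExponent t i j * rowSgn M ni K t σ := by
  rw [rowSgn_eq_ite fun p => hK _, rowSgn_eq_ite hK, blocksBijective_comp_perm]
  split_ifs with h
  · set s := Equiv.swap i j
    calc classInvSign (t ∘ s) id (σ ∘ s) = classInvSign (t ∘ s) (s ∘ s) (σ ∘ s) := by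
          rw [← Equiv.Perm.coe_mul, Equiv.swap_mul_self, Equiv.Perm.coe_one]
      _ = classInvSign t s σ := classInvSign_comp_equiv s t s σ
      _ = classInvSign t id s * classInvSign t id σ :=
          classInvSign_eq_mul id s.injective injective_id fun _ _ => h.eq_of_eq hK
      _ = _ := by rw [classInvSign_id_swap t hij]
  · rw [mul_zero]

end RowSign

/-- Column swap: for a balanced table `T` and `i < j`,
`Δ_T = (−1)^ℓ Δ_{(i,j)T}` where `ℓ = Σ_m (#{c ∈ [i,j] : T_{m,i} = T_{m,c}} +
#{c ∈ [i,j] : T_{m,j} = T_{m,c}} − δ_{T_{m,i},T_{m,j}})`. -/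
theorem delta_column_swap (d M : ℕ) (n : Fin d → ℕ) (T : Fin d → Fin M → ℕ)
    (hT : IsBalanced d M n T) (i j : Fin M) (hij : i < j) :
    ∀ X : ((i : Fin d) → Fin (n i)) → ℂ,
      Delta d M n T X =
        (-1 : ℂ) ^ (∑ m : Fin d,
            (((Finset.Icc i j).filter fun c => T m i = T m c).card +
              ((Finset.Icc i j).filter fun c => T m j = T m c).card -
              if T m i = T m j then 1 else 0)) *
          Delta d M n (fun m p => T m (Equiv.swap i j p)) X := by
  intro X
  set L := ∑ m : Fin d, swapExponent (T m) i j
  let swapCols (σ : (m : Fin d) → Fin M → Fin (n m)) : (m : Fin d) → Fin M → Fin (n m) :=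
    fun m p => σ m (Equiv.swap i j p)
  have hswap : Involutive swapCols := fun σ => by simp [swapCols]
  have hsummand (σ : (m : Fin d) → Fin M → Fin (n m)) :
      ((∏ m, rowSgn M (n m) (M / n m) (fun p => T m (Equiv.swap i j p)) (swapCols σ m) : ℤ)
          : ℂ) * ∏ p, X (fun m => swapCols σ m p) =
        (-1) ^ L * (((∏ m, rowSgn M (n m) (M / n m) (T m) (σ m) : ℤ) : ℂ) *
          ∏ p, X fun m => σ m p) := by
    simp only [swapCols, rowSgn_comp_swap (hT _).1 hij, prod_mul_distrib, prod_pow_eq_pow_sum,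
      Equiv.prod_comp (Equiv.swap i j) fun p => X fun m => σ m p]
    push_cast
    ring
  have hswapped :
      Delta d M n (fun m p => T m (Equiv.swap i j p)) X = (-1) ^ L * Delta d M n T X := by
    rw [Delta, ← hswap.bijective.sum_comp, Delta, mul_sum]
    exact sum_congr rfl fun σ _ => hsummand σ
  change Delta d M n T X = (-1) ^ L * _
  rw [hswapped, ← mul_assoc, ← pow_add, Even.neg_one_pow ⟨L, rfl⟩, one_mul]
end

section
/- Multiplicativity under horizontal concatenation: if T_1 and T_2 are balanced tables for the same format (n_1,…,n_d) of degrees M_1, M_2, then Δ_{T_1} · Δ_{T_2} = Δ_{(T_1 T_2)}, where (T_1 T_2) is the horizontal concatenation in which each entry of row i of T_2 is increased by M_1/n_i. -/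
open scoped Classical

/-! `rowSgn` is a product of block signs over the values of a row. In the concatenated row the
blocks are those of `T₁ i` followed by the shifted blocks of `T₂ i`, each lying inside one half,
and a block sign does not change when it is read through the order embedding of that half.
Splitting each `σ_i` into its two halves therefore factors the sum defining `Δ`. -/

open Finset

def blockInversions (M ni : ℕ) (t : Fin M → ℕ) (σ : Fin M → Fin ni) (v : ℕ) :
    Set (Fin M × Fin M) :=
  {pq | pq.1 < pq.2 ∧ t pq.1 = v ∧ t pq.2 = v ∧ σ pq.2 < σ pq.1}

noncomputable def blockSgn (M ni : ℕ) (t : Fin M → ℕ) (σ : Fin M → Fin ni) (v : ℕ) : ℤ :=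
  if ∀ x : Fin ni, ∃! p : Fin M, t p = v ∧ σ p = x then
    (-1 : ℤ) ^ (blockInversions M ni t σ v).ncard
  else 0

lemma rowSgn_eq_prod_blockSgn (M ni K : ℕ) (t : Fin M → ℕ) (σ : Fin M → Fin ni) :
    rowSgn M ni K t σ = ∏ v ∈ range K, blockSgn M ni t σ v := rfl

section BlockTransfer

variable {M N ni : ℕ} {e : Fin M → Fin N} {t : Fin N → ℕ} {t' : Fin M → ℕ}
  {σ : Fin N → Fin ni} {σ' : Fin M → Fin ni} {v v' : ℕ}

lemma existsUnique_block_iff (he : Function.Injective e)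
    (hsupp : ∀ p, t p = v → p ∈ Set.range e) (ht : ∀ q, t (e q) = v ↔ t' q = v')
    (hσ : ∀ q, σ (e q) = σ' q) (x : Fin ni) :
    (∃! p, t p = v ∧ σ p = x) ↔ ∃! q, t' q = v' ∧ σ' q = x := by
  constructor
  · rintro ⟨p, ⟨hpv, hpx⟩, huniq⟩
    obtain ⟨q, rfl⟩ := hsupp p hpv
    refine ⟨q, ⟨(ht q).mp hpv, hσ q ▸ hpx⟩, fun q' ⟨hq'v, hq'x⟩ => he ?_⟩
    exact huniq (e q') ⟨(ht q').mpr hq'v, (hσ q').symm ▸ hq'x⟩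
  · rintro ⟨q, ⟨hqv, hqx⟩, huniq⟩
    refine ⟨e q, ⟨(ht q).mpr hqv, (hσ q).symm ▸ hqx⟩, fun p ⟨hpv, hpx⟩ => ?_⟩
    obtain ⟨q', rfl⟩ := hsupp p hpv
    exact congrArg e (huniq q' ⟨(ht q').mp hpv, hσ q' ▸ hpx⟩)

lemma blockInversions_eq_image (he : StrictMono e)
    (hsupp : ∀ p, t p = v → p ∈ Set.range e) (ht : ∀ q, t (e q) = v ↔ t' q = v')
    (hσ : ∀ q, σ (e q) = σ' q) :
    blockInversions N ni t σ v = Prod.map e e '' blockInversions M ni t' σ' v' := by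
  ext ⟨p, q⟩
  constructor
  · rintro ⟨hlt, hpv, hqv, hσlt⟩
    obtain ⟨a, rfl⟩ := hsupp p hpv
    obtain ⟨b, rfl⟩ := hsupp q hqv
    exact ⟨(a, b), ⟨he.lt_iff_lt.mp hlt, (ht a).mp hpv, (ht b).mp hqv, hσ a ▸ hσ b ▸ hσlt⟩, rfl⟩
  · rintro ⟨⟨a, b⟩, ⟨hlt, hav, hbv, hσlt⟩, he'⟩
    obtain ⟨rfl, rfl⟩ := Prod.ext_iff.mp he'
    exact ⟨he hlt, (ht a).mpr hav, (ht b).mpr hbv, (hσ a).symm ▸ (hσ b).symm ▸ hσlt⟩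

lemma blockSgn_eq_of_strictMono (he : StrictMono e)
    (hsupp : ∀ p, t p = v → p ∈ Set.range e) (ht : ∀ q, t (e q) = v ↔ t' q = v')
    (hσ : ∀ q, σ (e q) = σ' q) :
    blockSgn N ni t σ v = blockSgn M ni t' σ' v' := by
  unfold blockSgn
  rw [blockInversions_eq_image he hsupp ht hσ,
    Set.ncard_image_of_injective _ (he.injective.prodMap he.injective)]
  exact if_congr (forall_congr' (existsUnique_block_iff he.injective hsupp ht hσ)) rfl rfl

end BlockTransfer

lemma rowSgn_append {M₁ M₂ ni K₁ : ℕ} (K₂ : ℕ) {t₁ : Fin M₁ → ℕ} (t₂ : Fin M₂ → ℕ)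
    (ht₁ : ∀ p, t₁ p < K₁) (σ₁ : Fin M₁ → Fin ni) (σ₂ : Fin M₂ → Fin ni) :
    rowSgn (M₁ + M₂) ni (K₁ + K₂) (Fin.append t₁ fun q => t₂ q + K₁) (Fin.append σ₁ σ₂) =
      rowSgn M₁ ni K₁ t₁ σ₁ * rowSgn M₂ ni K₂ t₂ σ₂ := by
  simp only [rowSgn_eq_prod_blockSgn, prod_range_add]
  congr 1
  · refine prod_congr rfl fun v hv => blockSgn_eq_of_strictMono (Fin.strictMono_castAdd M₂)
      (fun p hp => ?_) (by simp) (by simp)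
    induction p using Fin.addCases with
    | left q => exact ⟨q, rfl⟩
    | right q => simp only [Fin.append_right] at hp; simp only [mem_range] at hv; omega
  · refine prod_congr rfl fun w _ => blockSgn_eq_of_strictMono (Fin.strictMono_natAdd M₁)
      (fun p hp => ?_) (fun q => by simp only [Fin.append_right]; omega) (by simp)
    induction p using Fin.addCases with
    | left q => simp only [Fin.append_left] at hp; have := ht₁ q; omega
    | right q => exact ⟨q, rfl⟩

lemma IsBalanced.dvd {d M : ℕ} {n : Fin d → ℕ} {T : Fin d → Fin M → ℕ}
    (h : IsBalanced d M n T) (i : Fin d) : n i ∣ M := by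
  obtain ⟨hlt, hcard⟩ := h i
  have hfiber : ∀ v ∈ range (M / n i), #{p | T i p = v} = n i := fun v hv => by
    rw [← Set.ncard_coe_finset]
    simpa using hcard v (mem_range.mp hv)
  have hM := card_eq_sum_card_fiberwise (s := univ) (f := T i)
    fun p _ => mem_range.mpr (hlt p)
  rw [sum_congr rfl hfiber, sum_const, card_range, card_univ, Fintype.card_fin,
    smul_eq_mul] at hM
  exact Dvd.intro_left _ hM.symm

lemma Fintype.sum_pi_fin_add {ι : Type*} [Fintype ι] [DecidableEq ι] {β : ι → Type*}
    [∀ i, Fintype (β i)] {R : Type*} [AddCommMonoid R] (m k : ℕ)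
    (f : ((i : ι) → Fin (m + k) → β i) → R) :
    ∑ σ, f σ = ∑ σ₁ : (i : ι) → Fin m → β i, ∑ σ₂ : (i : ι) → Fin k → β i,
      f fun i => Fin.append (σ₁ i) (σ₂ i) := by
  rw [← Fintype.sum_prod_type',
    ← (((Equiv.arrowProdEquivProdArrow _ _ _).symm.trans
      (Equiv.piCongrRight fun _ => Fin.appendEquiv m k))).sum_comp]
  rfl

theorem delta_horizontal_concat_general (d M₁ M₂ : ℕ) (n : Fin d → ℕ)
    (T₁ : Fin d → Fin M₁ → ℕ) (T₂ : Fin d → Fin M₂ → ℕ)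
    (h₁ : IsBalanced d M₁ n T₁) :
    ∀ X : ((i : Fin d) → Fin (n i)) → ℂ,
      Delta d M₁ n T₁ X * Delta d M₂ n T₂ X =
        Delta d (M₁ + M₂) n
          (fun i p => Fin.addCases (motive := fun _ => ℕ)
            (fun p₁ => T₁ i p₁) (fun p₂ => T₂ i p₂ + M₁ / n i) p) X := by
  intro X
  have hblocks : ∀ i, (M₁ + M₂) / n i = M₁ / n i + M₂ / n i :=
    fun i => Nat.add_div_of_dvd_right (h₁.dvd i)
  change _ = Delta d (M₁ + M₂) n (fun i => Fin.append (T₁ i) fun q => T₂ i q + M₁ / n i) X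
  simp only [Delta, sum_mul_sum, Fintype.sum_pi_fin_add M₁ M₂]
  refine sum_congr rfl fun σ₁ _ => sum_congr rfl fun σ₂ _ => ?_
  simp only [hblocks, rowSgn_append _ _ (h₁ _).1, prod_mul_distrib, Fin.prod_univ_add,
    Fin.append_left, Fin.append_right]
  push_cast
  ring

/-- Multiplicativity under horizontal concatenation:
`Δ_{T₁} · Δ_{T₂} = Δ_{(T₁T₂)}`, where in the concatenated table each entry of row `i`
of `T₂` is increased by `M₁/n_i`. -/
theorem delta_horizontal_concat (d M₁ M₂ : ℕ) (n : Fin d → ℕ)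
    (T₁ : Fin d → Fin M₁ → ℕ) (T₂ : Fin d → Fin M₂ → ℕ)
    (h₁ : IsBalanced d M₁ n T₁) (h₂ : IsBalanced d M₂ n T₂) :
    ∀ X : ((i : Fin d) → Fin (n i)) → ℂ,
      Delta d M₁ n T₁ X * Delta d M₂ n T₂ X =
        Delta d (M₁ + M₂) n
          (fun i p => Fin.addCases (motive := fun _ => ℕ)
            (fun p₁ => T₁ i p₁) (fun p₂ => T₂ i p₂ + M₁ / n i) p) X :=
  delta_horizontal_concat_general d M₁ M₂ n T₁ T₂ h₁
end

section
/- Factorization under vertical concatenation: let T_1 be an ℓ × M balanced table for format (n_1,…,n_ℓ) and T_2 a (d−ℓ) × M balanced table for format (n_{ℓ+1},…,n_d), and let T be their vertical concatenation. Then for all tensors Y ∈ ℂ^{n_1}⊗⋯⊗ℂ^{n_ℓ} and Z ∈ ℂ^{n_{ℓ+1}}⊗⋯⊗ℂ^{n_d}, Δ_T(Y ⊗ Z) = Δ_{T_1}(Y) · Δ_{T_2}(Z). Consequently, if Δ_{T_1} and Δ_{T_2} are nonzero polynomials, so is Δ_T. -/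
open scoped Classical

def Fin.piAddEquiv (l r : ℕ) (β : Fin (l + r) → Type*) :
    ((i : Fin l) → β (Fin.castAdd r i)) × ((i : Fin r) → β (Fin.natAdd l i)) ≃
      ((i : Fin (l + r)) → β i) where
  toFun p i := Fin.addCases (motive := β) p.1 p.2 i
  invFun f := (fun i => f (Fin.castAdd r i), fun i => f (Fin.natAdd l i))
  left_inv p := by ext i <;> simp
  right_inv f := by
    funext i
    refine Fin.addCases (fun i => ?_) (fun i => ?_) i <;> simp

theorem Delta_tensor (l r M : ℕ) (n : Fin (l + r) → ℕ)
    (T₁ : Fin l → Fin M → ℕ) (T₂ : Fin r → Fin M → ℕ)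
    (Y : ((i : Fin l) → Fin (n (Fin.castAdd r i))) → ℂ)
    (Z : ((i : Fin r) → Fin (n (Fin.natAdd l i))) → ℂ) :
    Delta (l + r) M n (fun i => Fin.addCases (motive := fun _ => Fin M → ℕ) T₁ T₂ i)
        (fun v => Y (fun i => v (Fin.castAdd r i)) * Z fun i => v (Fin.natAdd l i)) =
      Delta l M (fun i => n (Fin.castAdd r i)) T₁ Y *
        Delta r M (fun i => n (Fin.natAdd l i)) T₂ Z := by
  unfold Delta
  rw [← (Fin.piAddEquiv l r fun i => Fin M → Fin (n i)).sum_comp, Fintype.sum_prod_type,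
    Finset.sum_mul_sum]
  refine Finset.sum_congr rfl fun σ₁ _ => Finset.sum_congr rfl fun σ₂ _ => ?_
  simp only [Fin.piAddEquiv, Equiv.coe_fn_mk, Fin.prod_univ_add, Fin.addCases_left,
    Fin.addCases_right, Finset.prod_mul_distrib]
  push_cast
  ring

theorem delta_vertical_concat_general (l r M : ℕ) (n : Fin (l + r) → ℕ)
    (T₁ : Fin l → Fin M → ℕ) (T₂ : Fin r → Fin M → ℕ) :
    (∀ (Y : ((i : Fin l) → Fin (n (Fin.castAdd r i))) → ℂ)
        (Z : ((i : Fin r) → Fin (n (Fin.natAdd l i))) → ℂ),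
      Delta (l + r) M n
          (fun i => Fin.addCases (motive := fun _ => Fin M → ℕ) T₁ T₂ i)
          (fun v => Y (fun i => v (Fin.castAdd r i)) * Z fun i => v (Fin.natAdd l i))
        = Delta l M (fun i => n (Fin.castAdd r i)) T₁ Y *
            Delta r M (fun i => n (Fin.natAdd l i)) T₂ Z) ∧
    ((∃ Y, Delta l M (fun i => n (Fin.castAdd r i)) T₁ Y ≠ 0) →
      (∃ Z, Delta r M (fun i => n (Fin.natAdd l i)) T₂ Z ≠ 0) →
      ∃ X : ((i : Fin (l + r)) → Fin (n i)) → ℂ,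
        Delta (l + r) M n
          (fun i => Fin.addCases (motive := fun _ => Fin M → ℕ) T₁ T₂ i) X ≠ 0) :=
  ⟨Delta_tensor l r M n T₁ T₂, fun ⟨Y, hY⟩ ⟨Z, hZ⟩ =>
    ⟨_, by rw [Delta_tensor]; exact mul_ne_zero hY hZ⟩⟩

/-- Factorization under vertical concatenation: if `T` is the vertical
concatenation of an `ℓ × M` balanced table `T₁` (format `n_1,…,n_ℓ`) and an `(d−ℓ) × M`
balanced table `T₂` (format `n_{ℓ+1},…,n_d`), then `Δ_T(Y ⊗ Z) = Δ_{T₁}(Y) · Δ_{T₂}(Z)`;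
consequently if `Δ_{T₁}` and `Δ_{T₂}` are nonzero polynomials, so is `Δ_T`. -/
theorem delta_vertical_concat (l r M : ℕ) (n : Fin (l + r) → ℕ)
    (T₁ : Fin l → Fin M → ℕ) (T₂ : Fin r → Fin M → ℕ)
    (h₁ : IsBalanced l M (fun i => n (Fin.castAdd r i)) T₁)
    (h₂ : IsBalanced r M (fun i => n (Fin.natAdd l i)) T₂) :
    (∀ (Y : ((i : Fin l) → Fin (n (Fin.castAdd r i))) → ℂ)
        (Z : ((i : Fin r) → Fin (n (Fin.natAdd l i))) → ℂ),
      Delta (l + r) M n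
          (fun i => Fin.addCases (motive := fun _ => Fin M → ℕ) T₁ T₂ i)
          (fun v => Y (fun i => v (Fin.castAdd r i)) * Z fun i => v (Fin.natAdd l i))
        = Delta l M (fun i => n (Fin.castAdd r i)) T₁ Y *
            Delta r M (fun i => n (Fin.natAdd l i)) T₂ Z) ∧
    ((∃ Y, Delta l M (fun i => n (Fin.castAdd r i)) T₁ Y ≠ 0) →
      (∃ Z, Delta r M (fun i => n (Fin.natAdd l i)) T₂ Z ≠ 0) →
      ∃ X : ((i : Fin (l + r)) → Fin (n i)) → ℂ,
        Delta (l + r) M n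
          (fun i => Fin.addCases (motive := fun _ => Fin M → ℕ) T₁ T₂ i) X ≠ 0) :=
  delta_vertical_concat_general l r M n T₁ T₂
end

section
/- Relative GL-invariance: for A_i ∈ GL(n_i) and any balanced table T of degree M, Δ_T((A_1,…,A_d)·X) = det(A_1)^{M/n_1} ⋯ det(A_d)^{M/n_d} · Δ_T(X). In particular Δ_T is invariant under SL(n_1)×⋯×SL(n_d). -/
/-!
Expanding `Δ_T((A_i)·X)` multilinearly, the coefficient of `∏_p X_{τ(p)}` factors over the rows
`i` of `T` and, inside row `i`, over the `M / n_i` blocks `{p | T_i p = v}`. Enumerating a block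
in increasing order turns its sign factor into the sign of a map `Fin n_i → Fin n_i` (zero unless
it is a bijection), and the block's contribution becomes the Leibniz expansion
`∑_f sgn f ∏_k A (f k) (g k) = det (A with columns permuted by g) = det A · sgn g`.
Each row thus yields `det(A_i)^{M/n_i}` times its own sign factor at `τ`.
-/

open scoped Classical

namespace BalancedTable

open Equiv Finset

noncomputable def sgn {n : ℕ} (g : Fin n → Fin n) : ℤ :=
  if h : Function.Bijective g then (Perm.sign (Equiv.ofBijective g h) : ℤ) else 0

theorem sgn_coe_perm {n : ℕ} (π : Perm (Fin n)) : sgn ⇑π = Perm.sign π := by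
  rw [sgn, dif_pos π.bijective, ofBijective_coe]

theorem signAux_eq_sign {n : ℕ} (π : Perm (Fin n)) : Perm.signAux π = Perm.sign π :=
  π.swap_induction_on (by simp) fun π i j hij h => by
    rw [Perm.signAux_mul, Perm.sign_mul, h, Perm.sign_swap hij, Perm.signAux_swap hij]

theorem sign_eq_neg_one_pow_ncard_inversions {n : ℕ} (π : Perm (Fin n)) :
    (Perm.sign π : ℤ) = (-1) ^ {kl : Fin n × Fin n | kl.1 < kl.2 ∧ π kl.2 < π kl.1}.ncard := by
  rw [← signAux_eq_sign, Perm.signAux]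
  simp only [Units.coe_prod, apply_ite Units.val, Units.val_neg, Units.val_one]
  rw [prod_ite, prod_const, prod_const, one_pow, mul_one, Set.ncard_eq_toFinset_card']
  refine congrArg _ (card_bij (fun kl _ => (kl.2, kl.1)) ?_ ?_ ?_)
  · rintro ⟨k, l⟩ hkl
    simp only [mem_filter, Perm.mem_finPairsLT] at hkl
    simp only [Set.mem_toFinset, Set.mem_ofPred_eq]
    exact ⟨hkl.1, hkl.2.lt_of_ne (π.injective.ne hkl.1.ne')⟩
  · rintro ⟨k, l⟩ - ⟨k', l'⟩ - h
    simp_all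
  · rintro ⟨k, l⟩ hkl
    simp only [Set.mem_toFinset, Set.mem_ofPred_eq] at hkl
    exact ⟨⟨l, k⟩, by simpa [Perm.mem_finPairsLT] using ⟨hkl.1, hkl.2.le⟩, rfl⟩

theorem sgn_eq_ite {n : ℕ} (g : Fin n → Fin n) :
    sgn g = if ∀ x, ∃! k, g k = x then
      (-1) ^ {kl : Fin n × Fin n | kl.1 < kl.2 ∧ g kl.2 < g kl.1}.ncard else 0 := by
  by_cases hg : Function.Bijective g
  · rw [sgn, dif_pos hg, if_pos ((Function.bijective_iff_existsUnique g).1 hg),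
      sign_eq_neg_one_pow_ncard_inversions, coe_ofBijective]
  · rw [sgn, dif_neg hg, if_neg (mt (Function.bijective_iff_existsUnique g).2 hg)]

theorem det_submatrix_id_eq_det_mul_sgn {R : Type*} [CommRing R] {n : ℕ}
    (A : Matrix (Fin n) (Fin n) R) (g : Fin n → Fin n) :
    (A.submatrix id g).det = A.det * sgn g := by
  by_cases hg : Function.Bijective g
  · rw [sgn, dif_pos hg, mul_comm, ← Matrix.det_permute', coe_ofBijective]
  · obtain ⟨a, b, hab, hne⟩ := Function.not_injective_iff.1 fun hi =>
      hg ⟨hi, Finite.surjective_of_injective hi⟩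
    rw [sgn, dif_neg hg, Int.cast_zero, mul_zero]
    exact Matrix.det_zero_of_column_eq hne fun k => by simp [hab]

theorem sum_sgn_mul_prod {R : Type*} [CommRing R] {n : ℕ}
    (A : Matrix (Fin n) (Fin n) R) (g : Fin n → Fin n) :
    ∑ f : Fin n → Fin n, (sgn f : R) * ∏ k, A (f k) (g k) = A.det * sgn g := by
  rw [← det_submatrix_id_eq_det_mul_sgn, Matrix.det_apply]
  refine (Fintype.sum_of_injective (fun π : Perm (Fin n) => ⇑π) DFunLike.coe_injective _ _
    (fun f hf => ?_) fun π => ?_).symm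
  · have hg : ¬ Function.Bijective f := fun hb => hf ⟨ofBijective f hb, rfl⟩
    rw [sgn, dif_neg hg, Int.cast_zero, zero_mul]
  · rw [sgn_coe_perm, Units.smul_def, zsmul_eq_mul]
    rfl

section Blocks

variable {M n K : ℕ} {t : Fin M → ℕ}

theorem exists_blockEquiv (ht : ∀ p, t p < K)
    (hcard : ∀ v < K, {p : Fin M | t p = v}.ncard = n) :
    ∃ E : (Σ _ : Fin K, Fin n) ≃ Fin M,
      (∀ v k, t (E ⟨v, k⟩) = v) ∧ ∀ v, StrictMono fun k => E ⟨v, k⟩ := by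
  let f : Fin M → Fin K := fun p => ⟨t p, ht p⟩
  have hfiber : ∀ v : Fin K, Fintype.card {p // f p = v} = n := fun v => by
    rw [← hcard v v.isLt, ← Nat.card_coe_set_eq, Nat.card_eq_fintype_card]
    exact Fintype.card_congr (Equiv.subtypeEquivRight fun p => Fin.ext_iff)
  let e := fun v => Fintype.orderIsoFinOfCardEq _ (hfiber v)
  refine ⟨(Equiv.sigmaCongrRight fun v => (e v).toEquiv).trans (Equiv.sigmaFiberEquiv f),
    fun v k => congrArg Fin.val ((e v) k).2, fun v a b hab => (e v).strictMono hab⟩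

theorem ite_inversions_eq_sgn {e : Fin n → Fin M} (he : StrictMono e) {v : ℕ}
    (hrange : ∀ p, t p = v ↔ p ∈ Set.range e) (σ : Fin M → Fin n) :
    (if ∀ x, ∃! p, t p = v ∧ σ p = x then (-1 : ℤ) ^ {pq : Fin M × Fin M |
        pq.1 < pq.2 ∧ t pq.1 = v ∧ t pq.2 = v ∧ σ pq.2 < σ pq.1}.ncard else 0)
      = sgn (σ ∘ e) := by
  have hunique : (∀ x, ∃! p, t p = v ∧ σ p = x) ↔ ∀ x, ∃! k, (σ ∘ e) k = x := by
    simp only [hrange]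
    refine forall_congr' fun x => ⟨?_, ?_⟩
    · rintro ⟨_, ⟨⟨k, rfl⟩, hk⟩, hunique⟩
      exact ⟨k, hk, fun l hl => he.injective (hunique (e l) ⟨⟨l, rfl⟩, hl⟩)⟩
    · rintro ⟨k, hk, hunique⟩
      exact ⟨e k, ⟨⟨k, rfl⟩, hk⟩, by rintro _ ⟨⟨l, rfl⟩, hl⟩; rw [hunique l hl]⟩
  have hinv : {pq : Fin M × Fin M | pq.1 < pq.2 ∧ t pq.1 = v ∧ t pq.2 = v ∧ σ pq.2 < σ pq.1} =
      Prod.map e e '' {kl | kl.1 < kl.2 ∧ (σ ∘ e) kl.2 < (σ ∘ e) kl.1} := by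
    ext ⟨p, q⟩
    constructor
    · rintro ⟨hpq, hp, hq, hσ⟩
      obtain ⟨k, rfl⟩ := (hrange p).1 hp
      obtain ⟨l, rfl⟩ := (hrange q).1 hq
      exact ⟨(k, l), ⟨he.lt_iff_lt.1 hpq, hσ⟩, rfl⟩
    · rintro ⟨⟨k, l⟩, ⟨hkl, hσ⟩, hkl'⟩
      obtain ⟨rfl, rfl⟩ := Prod.ext_iff.1 hkl'
      exact ⟨he hkl, (hrange _).2 ⟨k, rfl⟩, (hrange _).2 ⟨l, rfl⟩, hσ⟩
  rw [sgn_eq_ite, hinv, Set.ncard_image_of_injective _ (he.injective.prodMap he.injective)]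
  exact if_congr hunique rfl rfl

variable (E : (Σ _ : Fin K, Fin n) ≃ Fin M)

theorem rowSgn_eq_prod_sgn (hEt : ∀ v k, t (E ⟨v, k⟩) = v)
    (hEmono : ∀ v, StrictMono fun k => E ⟨v, k⟩) (σ : Fin M → Fin n) :
    rowSgn M n K t σ = ∏ v : Fin K, sgn fun k => σ (E ⟨v, k⟩) := by
  rw [rowSgn, ← Fin.prod_univ_eq_prod_range]
  refine prod_congr rfl fun v _ =>
    ite_inversions_eq_sgn (hEmono v) (fun p => ⟨fun hp => ?_, ?_⟩) σ
  · obtain ⟨⟨w, k⟩, rfl⟩ := E.surjective p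
    obtain rfl : w = v := Fin.ext ((hEt w k).symm.trans hp)
    exact ⟨k, rfl⟩
  · rintro ⟨k, rfl⟩
    exact hEt v k

theorem sum_rowSgn_mul_prod_of_equiv {R : Type*} [CommRing R]
    (hEt : ∀ v k, t (E ⟨v, k⟩) = v) (hEmono : ∀ v, StrictMono fun k => E ⟨v, k⟩)
    (A : Matrix (Fin n) (Fin n) R) (τ : Fin M → Fin n) :
    ∑ σ : Fin M → Fin n, (rowSgn M n K t σ : R) * ∏ p, A (σ p) (τ p) =
      A.det ^ K * rowSgn M n K t τ := by
  let W : (Fin K → Fin n → Fin n) ≃ (Fin M → Fin n) :=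
    (Equiv.piCurry fun _ _ => Fin n).symm.trans (E.arrowCongr (Equiv.refl _))
  have hprod : ∀ f : Fin M → R, ∏ p, f p = ∏ v : Fin K, ∏ k, f (E ⟨v, k⟩) := fun f => by
    rw [← E.prod_comp, ← univ_sigma_univ, prod_sigma]
  calc _ = ∑ g : Fin K → Fin n → Fin n,
          ∏ v, ((sgn (g v) : R) * ∏ k, A (g v k) (τ (E ⟨v, k⟩))) := by
        refine (Fintype.sum_equiv W _ _ fun g => ?_).symm
        rw [rowSgn_eq_prod_sgn E hEt hEmono, hprod, Int.cast_prod, ← prod_mul_distrib]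
        simp [W, Sigma.uncurry]
    _ = ∏ v : Fin K, ∑ f : Fin n → Fin n, (sgn f : R) * ∏ k, A (f k) (τ (E ⟨v, k⟩)) := by
        rw [Fintype.prod_sum]
    _ = _ := by
        simp_rw [sum_sgn_mul_prod, prod_mul_distrib, prod_const, card_univ, Fintype.card_fin,
          rowSgn_eq_prod_sgn E hEt hEmono τ, Int.cast_prod]

end Blocks

theorem sum_rowSgn_mul_prod {R : Type*} [CommRing R] {M n K : ℕ} {t : Fin M → ℕ}
    (ht : ∀ p, t p < K) (hcard : ∀ v < K, {p : Fin M | t p = v}.ncard = n)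
    (A : Matrix (Fin n) (Fin n) R) (τ : Fin M → Fin n) :
    ∑ σ : Fin M → Fin n, (rowSgn M n K t σ : R) * ∏ p, A (σ p) (τ p) =
      A.det ^ K * rowSgn M n K t τ := by
  obtain ⟨E, hEt, hEmono⟩ := exists_blockEquiv ht hcard
  exact sum_rowSgn_mul_prod_of_equiv E hEt hEmono A τ

section Delta

variable {d M : ℕ} {n : Fin d → ℕ} (T : Fin d → Fin M → ℕ)

theorem Delta_eq_sum_columns (X : ((i : Fin d) → Fin (n i)) → ℂ) :
    Delta d M n T X = ∑ τ : Fin M → (i : Fin d) → Fin (n i),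
      (∏ i, (rowSgn M (n i) (M / n i) (T i) fun p => τ p i : ℂ)) * ∏ p, X (τ p) :=
  Fintype.sum_equiv (Equiv.piComm fun i (_ : Fin M) => Fin (n i)) _ _ fun σ => by
    push_cast
    rfl

theorem Delta_act_eq_sum (A : (i : Fin d) → Matrix (Fin (n i)) (Fin (n i)) ℂ)
    (X : ((i : Fin d) → Fin (n i)) → ℂ) :
    Delta d M n T (fun j => ∑ v : (i : Fin d) → Fin (n i), (∏ i, A i (j i) (v i)) * X v) =
      ∑ τ : Fin M → (i : Fin d) → Fin (n i),
        (∏ i, ∑ s : Fin M → Fin (n i),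
          (rowSgn M (n i) (M / n i) (T i) s : ℂ) * ∏ p, A i (s p) (τ p i)) * ∏ p, X (τ p) := by
  simp_rw [Delta, Fintype.prod_sum, mul_sum, prod_mul_distrib]
  rw [sum_comm]
  refine sum_congr rfl fun τ _ => ?_
  rw [sum_mul]
  refine sum_congr rfl fun σ _ => ?_
  rw [prod_comm (f := fun p i => A i (σ i p) (τ p i)), Int.cast_prod, mul_assoc]

end Delta

end BalancedTable

/-- Relative GL-invariance: for `A_i ∈ GL(n_i)` and a balanced table `T`
of degree `M`, `Δ_T((A_1,…,A_d)·X) = det(A_1)^{M/n_1} ⋯ det(A_d)^{M/n_d} · Δ_T(X)`;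
in particular `Δ_T` is invariant under `SL(n_1) × ⋯ × SL(n_d)`. -/
theorem delta_relative_gl_invariance (d M : ℕ) (n : Fin d → ℕ)
    (T : Fin d → Fin M → ℕ) (hT : IsBalanced d M n T)
    (X : ((i : Fin d) → Fin (n i)) → ℂ) :
    (∀ A : (i : Fin d) → Matrix (Fin (n i)) (Fin (n i)) ℂ,
      Delta d M n T
          (fun j => ∑ v : (i : Fin d) → Fin (n i), (∏ i, A i (j i) (v i)) * X v)
        = (∏ i, (A i).det ^ (M / n i)) * Delta d M n T X) ∧
    (∀ A : (i : Fin d) → Matrix (Fin (n i)) (Fin (n i)) ℂ, (∀ i, (A i).det = 1) →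
      Delta d M n T
          (fun j => ∑ v : (i : Fin d) → Fin (n i), (∏ i, A i (j i) (v i)) * X v)
        = Delta d M n T X) := by
  have hGL : ∀ A : (i : Fin d) → Matrix (Fin (n i)) (Fin (n i)) ℂ,
      Delta d M n T (fun j => ∑ v : (i : Fin d) → Fin (n i), (∏ i, A i (j i) (v i)) * X v)
        = (∏ i, (A i).det ^ (M / n i)) * Delta d M n T X := fun A => by
    rw [BalancedTable.Delta_act_eq_sum, BalancedTable.Delta_eq_sum_columns, Finset.mul_sum]
    refine Finset.sum_congr rfl fun τ _ => ?_
    simp_rw [BalancedTable.sum_rowSgn_mul_prod (hT _).1 (hT _).2, Finset.prod_mul_distrib,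
      mul_assoc]
  exact ⟨hGL, fun A hA => by simp [hGL, hA]⟩
end

section
/- Evaluation at the unit tensor counts signed Latin hypercubes: if T is a d × nk balanced table with all columns distinct and ordered lexicographically (entries of row i in [k]), then Δ_T(I_n) = AT_d(k,T), the signed sum of sgn(C) over all partial Latin hypercubes C of length k whose type is the set of columns of T. In particular, for the full table T with all k^d distinct columns, Δ_T(I_{k^{d−1}}) = AT_d(k). -/
open scoped Classical

namespace ATaux

open AT Finset

lemma cellLt_asymm {d k : ℕ} {a b : Fin d → Fin k} (h1 : cellLt a b) (h2 : cellLt b a) :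
    False := by
  obtain ⟨i, hi, hlt⟩ := h1
  obtain ⟨i', hi', hlt'⟩ := h2
  rcases lt_trichotomy i i' with h | h | h
  · exact (ne_of_gt hlt) (hi' i h)
  · subst h; exact absurd hlt' (not_lt.mpr hlt.le)
  · exact (ne_of_gt hlt') (hi i' h)

lemma cellLt_ne {d k : ℕ} {a b : Fin d → Fin k} (h : cellLt a b) : a ≠ b := by
  obtain ⟨i, -, hlt⟩ := h
  intro hab
  rw [hab] at hlt
  exact lt_irrefl _ hlt

lemma rowSgn_eq_one (M K : ℕ) (t : Fin M → ℕ) (σ : Fin M → Fin 0) :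
    rowSgn M 0 K t σ = 1 := by
  haveI : IsEmpty (Fin M) := ⟨fun p => (σ p).elim0⟩
  unfold rowSgn
  apply Finset.prod_eq_one
  intro v _
  rw [if_pos (fun x => x.elim0)]
  have h : {pq : Fin M × Fin M |
      pq.1 < pq.2 ∧ t pq.1 = v ∧ t pq.2 = v ∧ σ pq.2 < σ pq.1} = ∅ :=
    Set.eq_empty_of_isEmpty _
  rw [h, Set.ncard_empty, pow_zero]

lemma core (d k n : ℕ) (T : Fin d → Fin (n * k) → ℕ)
    (hb : ∀ i p, T i p < k)
    (hdist : ∀ p q : Fin (n * k), p ≠ q → ∃ i, T i p ≠ T i q)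
    (hlex : ∀ p q : Fin (n * k), p < q →
      ∃ i : Fin d, (∀ i' : Fin d, i' < i → T i' p = T i' q) ∧ T i p < T i q) :
    (∑ τ : Fin (n * k) → Fin n, ∏ i, rowSgn (n * k) n k (T i) τ)
      = ∑ C : (Fin d → Fin k) → Fin (n + 1),
          if AT.IsPartialLatin d k n
              (Finset.image (fun p => fun i => (⟨T i p, hb i p⟩ : Fin k)) Finset.univ)
              (fun a => (C a : ℕ)) then
            AT.fullSgn (fun a => ((C a : ℕ)))
          else 0 := by
  classical
  set col : Fin (n * k) → (Fin d → Fin k) := fun p => fun i => (⟨T i p, hb i p⟩ : Fin k)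
    with hcoldef
  have colinj : Function.Injective col := by
    intro p q h
    by_contra hne
    obtain ⟨i, hi⟩ := hdist p q hne
    exact hi (congrArg Fin.val (congrFun h i))
  set Φ : (Fin (n * k) → Fin n) → ((Fin d → Fin k) → Fin (n + 1)) :=
    fun τ a => if h : ∃ p, col p = a then (τ h.choose).succ else 0 with hΦdef
  have Φcol : ∀ τ p, Φ τ (col p) = (τ p).succ := by
    intro τ p
    have h : ∃ q, col q = col p := ⟨p, rfl⟩
    simp only [hΦdef, dif_pos h]
    rw [colinj h.choose_spec]
  have Φne : ∀ τ a, Φ τ a ≠ 0 ↔ ∃ p, col p = a := by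
    intro τ a
    constructor
    · intro h
      by_contra hn'
      exact h (dif_neg hn')
    · rintro ⟨p, rfl⟩
      rw [Φcol]
      exact Fin.succ_ne_zero _
  have Φvalne : ∀ τ a, ((Φ τ a : ℕ)) ≠ 0 ↔ ∃ p, col p = a := by
    intro τ a
    rw [← Φne τ a]
    rw [Ne, Ne, Fin.ext_iff, Fin.val_zero]
  have Tmem : ∀ a, a ∈ Finset.image col Finset.univ ↔ ∃ p, col p = a := by
    intro a; simp [Finset.mem_image]
  -- characterization of IsPartialLatin for images of Φ
  have claimPL : ∀ τ : Fin (n * k) → Fin n,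
      AT.IsPartialLatin d k n (Finset.image col Finset.univ) (fun a => ((Φ τ a : ℕ)))
        ↔ ∀ (i : Fin d) (v : ℕ), v < k → ∀ x : Fin n,
            ∃! p : Fin (n * k), T i p = v ∧ τ p = x := by
    intro τ
    constructor
    · rintro ⟨-, -, hslice⟩ i v hv x
      obtain ⟨a, ⟨ha1, ha2⟩, hau⟩ := hslice i ⟨v, hv⟩ ((x : ℕ) + 1)
        (Nat.succ_le_succ (Nat.zero_le _)) (Nat.succ_le_of_lt x.isLt)
      simp only [] at ha2
      have hane : ((Φ τ a : ℕ)) ≠ 0 := by omega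
      obtain ⟨p, rfl⟩ := (Φvalne τ a).mp hane
      have hvp : T i p = v := congrArg Fin.val ha1
      have hτp : τ p = x := by
        rw [Φcol, Fin.val_succ] at ha2
        exact Fin.ext (by omega)
      refine ⟨p, ⟨hvp, hτp⟩, ?_⟩
      rintro q ⟨hq1, hq2⟩
      have hq : col q = col p := by
        apply hau
        refine ⟨Fin.ext hq1, ?_⟩
        show ((Φ τ (col q) : ℕ)) = (x : ℕ) + 1
        rw [Φcol, Fin.val_succ, hq2]
      exact colinj hq
    · intro hcond
      refine ⟨?_, ?_, ?_⟩
      · intro a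
        rw [Tmem]
        exact (Φvalne τ a).symm
      · intro a
        exact Nat.lt_succ_iff.mp (Φ τ a).isLt
      · intro ℓ j v hv1 hvn
        obtain ⟨p, ⟨hT, hτ⟩, hu⟩ := hcond ℓ j.val j.isLt ⟨v - 1, by omega⟩
        have hcp : ((Φ τ (col p) : ℕ)) = v := by
          rw [Φcol, Fin.val_succ, hτ]
          show v - 1 + 1 = v
          omega
        refine ⟨col p, ⟨Fin.ext hT, hcp⟩, ?_⟩
        rintro a ⟨ha1, ha2⟩
        simp only [] at ha2
        have hane : ((Φ τ a : ℕ)) ≠ 0 := by omega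
        obtain ⟨q, rfl⟩ := (Φvalne τ a).mp hane
        have h1 : T ℓ q = j.val := congrArg Fin.val ha1
        have h2 : τ q = ⟨v - 1, by omega⟩ := by
          rw [Φcol, Fin.val_succ] at ha2
          exact Fin.ext (show ((τ q : ℕ)) = v - 1 by omega)
        rw [hu q ⟨h1, h2⟩]
  -- inversion counts agree
  have claimInv : ∀ (τ : Fin (n * k) → Fin n) (i : Fin d) (v : ℕ) (hv : v < k),
      Set.ncard {pq : Fin (n * k) × Fin (n * k) |
          pq.1 < pq.2 ∧ T i pq.1 = v ∧ T i pq.2 = v ∧ τ pq.2 < τ pq.1}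
        = AT.sliceInv (fun a => ((Φ τ a : ℕ))) i ⟨v, hv⟩ := by
    intro τ i v hv
    unfold AT.sliceInv
    have hset : {p : (Fin d → Fin k) × (Fin d → Fin k) |
        p.1 i = ⟨v, hv⟩ ∧ p.2 i = ⟨v, hv⟩ ∧ cellLt p.1 p.2 ∧
          (fun a => ((Φ τ a : ℕ))) p.2 ≠ 0 ∧
          (fun a => ((Φ τ a : ℕ))) p.2 < (fun a => ((Φ τ a : ℕ))) p.1}
        = Prod.map col col '' {pq : Fin (n * k) × Fin (n * k) |
            pq.1 < pq.2 ∧ T i pq.1 = v ∧ T i pq.2 = v ∧ τ pq.2 < τ pq.1} := by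
      apply Set.Subset.antisymm
      · rintro ⟨a, b⟩ ⟨h1, h2, hab, hne0, hlt⟩
        simp only [Set.mem_setOf_eq] at hne0 hlt ⊢
        obtain ⟨q, rfl⟩ := (Φvalne τ b).mp hne0
        have hane : ((Φ τ a : ℕ)) ≠ 0 := by omega
        obtain ⟨p, rfl⟩ := (Φvalne τ a).mp hane
        have hpq : p ≠ q := by
          intro h; exact cellLt_ne hab (by rw [h])
        have hplt : p < q := by
          rcases lt_or_gt_of_ne hpq with h | h
          · exact h
          · exfalso
            obtain ⟨i₀, hpre, hlt₀⟩ := hlex q p h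
            exact cellLt_asymm hab
              ⟨i₀, fun j' hj' => Fin.ext (hpre j' hj'), hlt₀⟩
        refine ⟨(p, q), ⟨hplt, congrArg Fin.val h1, congrArg Fin.val h2, ?_⟩, rfl⟩
        show τ q < τ p
        rw [Φcol, Φcol, Fin.val_succ, Fin.val_succ] at hlt
        exact Fin.lt_def.mpr (by omega)
      · rintro ab ⟨⟨p, q⟩, ⟨hpq, hTp, hTq, hτ⟩, rfl⟩
        simp only [Prod.map_apply, Set.mem_setOf_eq]
        refine ⟨Fin.ext hTp, Fin.ext hTq, ?_, ?_, ?_⟩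
        · obtain ⟨i₀, hpre, hlt₀⟩ := hlex p q hpq
          exact ⟨i₀, fun j' hj' => Fin.ext (hpre j' hj'), hlt₀⟩
        · show ((Φ τ (col q) : ℕ)) ≠ 0
          rw [Φcol]; simp
        · show ((Φ τ (col q) : ℕ)) < ((Φ τ (col p) : ℕ))
          rw [Φcol, Φcol, Fin.val_succ, Fin.val_succ]
          have h' : (τ q : ℕ) < (τ p : ℕ) := Fin.lt_def.mp hτ
          omega
    rw [hset, Set.ncard_image_of_injective _ (colinj.prodMap colinj)]
  -- the term-by-term identity
  have claimTerm : ∀ τ : Fin (n * k) → Fin n,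
      (∏ i, rowSgn (n * k) n k (T i) τ)
        = if AT.IsPartialLatin d k n (Finset.image col Finset.univ)
              (fun a => ((Φ τ a : ℕ))) then
            AT.fullSgn (fun a => ((Φ τ a : ℕ)))
          else 0 := by
    intro τ
    by_cases hPL : AT.IsPartialLatin d k n (Finset.image col Finset.univ)
        (fun a => ((Φ τ a : ℕ)))
    · rw [if_pos hPL]
      have hcond := (claimPL τ).mp hPL
      unfold AT.fullSgn
      apply Finset.prod_congr rfl
      intro i _
      unfold AT.dirSgn rowSgn
      refine Finset.prod_bij (fun v hv => (⟨v, Finset.mem_range.mp hv⟩ : Fin k))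
        (fun v hv => Finset.mem_univ _) ?_ ?_ ?_
      · intro v1 h1 v2 h2 h
        exact congrArg Fin.val h
      · intro j _
        exact ⟨j.val, Finset.mem_range.mpr j.isLt, rfl⟩
      · intro v hv
        rw [if_pos (hcond i v (Finset.mem_range.mp hv)),
          claimInv τ i v (Finset.mem_range.mp hv)]
    · rw [if_neg hPL]
      have h := (claimPL τ).not.mp hPL
      push_neg at h
      obtain ⟨i, v, hv, x, hx⟩ := h
      apply Finset.prod_eq_zero (Finset.mem_univ i)
      unfold rowSgn
      apply Finset.prod_eq_zero (Finset.mem_range.mpr hv)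
      rw [if_neg]
      intro hall
      exact hx (hall x)
  -- conclude by reindexing the sum along Φ
  refine Finset.sum_of_injOn Φ ?_ (fun τ _ => Finset.mem_coe.mpr (Finset.mem_univ _)) ?_ ?_
  · intro τ _ τ' _ h
    funext p
    have := congrFun h (col p)
    rw [Φcol, Φcol] at this
    exact Fin.succ_inj.mp this
  · intro C _ hC
    rw [if_neg]
    intro hPL
    apply hC
    obtain ⟨hsupp, hle, -⟩ := hPL
    have hcp : ∀ p, ((C (col p) : ℕ)) ≠ 0 := by
      intro p
      exact (hsupp (col p)).mp ((Tmem (col p)).mpr ⟨p, rfl⟩)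
    have hlt1 : ∀ p, (C (col p) : ℕ) - 1 < n := by
      intro p
      have := hle (col p)
      have := hcp p
      omega
    refine ⟨fun p => ⟨(C (col p) : ℕ) - 1, hlt1 p⟩, Finset.mem_coe.mpr (Finset.mem_univ _), ?_⟩
    funext a
    by_cases h : ∃ p, col p = a
    · obtain ⟨p, rfl⟩ := h
      refine (Φcol (fun q => ⟨(C (col q) : ℕ) - 1, hlt1 q⟩) p).trans ?_
      apply Fin.ext
      rw [Fin.val_succ]
      show (C (col p) : ℕ) - 1 + 1 = (C (col p) : ℕ)
      have := hcp p
      omega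
    · rw [show Φ (fun p => (⟨(C (col p) : ℕ) - 1, hlt1 p⟩ : Fin n)) a = 0 from dif_neg h]
      have h0 : ((C a : ℕ)) = 0 := by
        by_contra hne
        exact h (((Tmem a).mp ((hsupp a).mpr hne)))
      exact (Fin.ext h0.symm : (0 : Fin (n + 1)) = C a)
  · intro τ _
    exact claimTerm τ

end ATaux

/-- Evaluation at the unit tensor counts signed partial Latin hypercubes:
if `T` is a `d × nk` balanced table with entries in `[k]`, all columns distinct and ordered
lexicographically, then `Δ_T(I_n) = AT_d(k,T)`, the signed sum over all partial Latin
hypercubes of length `k` whose type is the set of columns of `T`. -/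
theorem delta_unit_tensor_eq_alon_tarsi (d k n : ℕ)
    (T : Fin d → Fin (n * k) → ℕ)
    (hT : IsBalanced d (n * k) (fun _ => n) T)
    (hb : ∀ i p, T i p < k)
    (hdist : ∀ p q : Fin (n * k), p ≠ q → ∃ i, T i p ≠ T i q)
    (hlex : ∀ p q : Fin (n * k), p < q →
      ∃ i : Fin d, (∀ i' : Fin d, i' < i → T i' p = T i' q) ∧ T i p < T i q) :
    Delta d (n * k) (fun _ => n) T
        (fun v => if ∀ i i' : Fin d, v i = v i' then 1 else 0)
      = ((∑ C : (Fin d → Fin k) → Fin (n + 1),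
          if AT.IsPartialLatin d k n
              (Finset.image (fun p => fun i => (⟨T i p, hb i p⟩ : Fin k)) Finset.univ)
              (fun a => (C a : ℕ)) then
            AT.fullSgn (fun a => ((C a : ℕ)))
          else 0 : ℤ) : ℂ) := by
  classical
  have hK : ∀ τ : Fin (n * k) → Fin n,
      (∏ i : Fin d, rowSgn (n * k) n ((n * k) / n) (T i) τ)
        = ∏ i : Fin d, rowSgn (n * k) n k (T i) τ := by
    rcases Nat.eq_zero_or_pos n with hn | hn
    · subst hn
      intro τ
      simp [ATaux.rowSgn_eq_one]
    · intro τ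
      rw [Nat.mul_div_cancel_left k hn]
  have hA : Delta d (n * k) (fun _ => n) T
        (fun v => if ∀ i i' : Fin d, v i = v i' then 1 else 0)
      = ∑ τ : Fin (n * k) → Fin n,
          ((∏ i : Fin d, rowSgn (n * k) n k (T i) τ : ℤ) : ℂ) := by
    simp only [Delta]
    rcases Nat.eq_zero_or_pos d with hd | hd
    · subst hd
      have hM1 : n * k ≤ 1 := by
        by_contra h
        push_neg at h
        have h2 := hdist ⟨0, by omega⟩ ⟨1, by omega⟩ (by simp [Fin.ext_iff])
        obtain ⟨i, -⟩ := h2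
        exact i.elim0
      have hcard : Fintype.card (Fin (n * k) → Fin n) = 1 := by
        rw [Fintype.card_fun, Fintype.card_fin, Fintype.card_fin]
        rcases Nat.le_one_iff_eq_zero_or_eq_one.mp hM1 with h | h
        · rw [h, pow_zero]
        · rw [h, pow_one]
          exact (Nat.eq_one_of_mul_eq_one_right h)
      simp only [Finset.univ_eq_empty (α := Fin 0), Finset.prod_empty, Int.cast_one,
        one_mul, IsEmpty.forall_iff, if_true, ite_true, Finset.prod_const_one,
        Finset.sum_const, Finset.card_univ, nsmul_eq_mul, mul_one]
      rw [Fintype.card_unique, hcard]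
    · refine (Finset.sum_of_injOn (fun (τ : Fin (n * k) → Fin n) (_ : Fin d) => τ) ?_
        (fun τ _ => Finset.mem_coe.mpr (Finset.mem_univ _)) ?_ ?_).symm
      · intro τ _ τ' _ h
        exact congrFun h ⟨0, hd⟩
      · intro σ _ hσ
        have hne : ¬ ∀ p : Fin (n * k), ∀ i i' : Fin d, σ i p = σ i' p := by
          intro hall
          apply hσ
          refine ⟨σ ⟨0, hd⟩, Finset.mem_coe.mpr (Finset.mem_univ _), ?_⟩
          funext i p
          exact hall p ⟨0, hd⟩ i
        obtain ⟨p, hp⟩ := not_forall.mp hne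
        have h0 : (∏ p' : Fin (n * k),
            if ∀ i i' : Fin d, σ i p' = σ i' p' then (1 : ℂ) else 0) = 0 :=
          Finset.prod_eq_zero (Finset.mem_univ p) (if_neg hp)
        rw [h0, mul_zero]
      · intro τ _
        simp only []
        rw [hK τ]
        simp
  rw [hA, show (∑ τ : Fin (n * k) → Fin n,
      ((∏ i : Fin d, rowSgn (n * k) n k (T i) τ : ℤ) : ℂ))
    = (((∑ τ : Fin (n * k) → Fin n, ∏ i : Fin d, rowSgn (n * k) n k (T i) τ : ℤ)) : ℂ) by
      push_cast; rfl]
  exact_mod_cast congrArg (fun z : ℤ => (z : ℂ)) (ATaux.core d k n T hb hdist hlex)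
end
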